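/- arXiv:2302.14841 — 7 statements merged into one kernel-verified Lean document; each statement's English description precedes it below -/
import Mathlib

section
/- Consider the planar predator–prey system ẋ = x(r·g(x) − q·y), ẏ = y(c·q·x − μ − m·y) (system (2.1) with n = 1). Assume μ/(c·q) < K and that the limit lim_{x→0⁺}(x·g'(x) + g(x)) exists and is positive. Then the system is uniformly persistent: there exists ε > 0 such that every solution (x(t), y(t)) defined for all t ≥ 0 with x(0) > 0 and y(0) > 0 satisfies liminf_{t→∞} min(x(t), y(t)) > ε. -/
/-!
The interior equilibrium `(xs, ys)` exists because `g` decreases through zero at `K > μ / (c q)`.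
With the Volterra function `volterra a u = u - a - a log (u / a) ≥ 0`, the Lyapunov function
`V = c volterra xs x + volterra ys y` has derivative `c r (x - xs) (g x - g xs) - m (y - ys)²`
along solutions, which is negative away from the equilibrium since `g` is decreasing. So `V`
decreases, which confines the solution to a compact subset of the open quadrant; on that set the
derivative is bounded away from zero wherever `V` is not small, so `V` eventually drops below any
positive level, and small sublevel sets of `V` stay away from the axes.
-/

open Filter Set Real

noncomputable def volterra (a u : ℝ) : ℝ := u - a - a * (log u - log a)

lemma volterra_self (a : ℝ) : volterra a a = 0 := by simp [volterra]

lemma sq_sqrt_sub_sqrt_le_volterra {a u : ℝ} (ha : 0 < a) (hu : 0 < u) :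
    (√u - √a) ^ 2 ≤ volterra a u := by
  have hsa : 0 < √a := sqrt_pos.2 ha
  have hlog : log u - log a ≤ 2 * (√u / √a - 1) := by
    have := log_le_sub_one_of_pos (div_pos (sqrt_pos.2 hu) hsa)
    rw [log_div (sqrt_pos.2 hu).ne' hsa.ne', log_sqrt hu.le, log_sqrt ha.le] at this
    linarith
  have hmul : a * (log u - log a) ≤ 2 * √a * √u - 2 * a := by
    calc a * (log u - log a) ≤ a * (2 * (√u / √a - 1)) := by gcongr
      _ = 2 * √a * √u - 2 * a := by
        field_simp
        linear_combination (-√u) * sq_sqrt ha.le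
  have := sq_sqrt hu.le
  have := sq_sqrt ha.le
  unfold volterra
  nlinarith

lemma volterra_nonneg {a u : ℝ} (ha : 0 < a) (hu : 0 < u) : 0 ≤ volterra a u :=
  (sq_nonneg _).trans (sq_sqrt_sub_sqrt_le_volterra ha hu)

lemma volterra_pos {a u : ℝ} (ha : 0 < a) (hu : 0 < u) (hne : u ≠ a) : 0 < volterra a u := by
  refine lt_of_lt_of_le ?_ (sq_sqrt_sub_sqrt_le_volterra ha hu)
  exact pow_two_pos_of_ne_zero (sub_ne_zero.2 fun h => hne ((sqrt_inj hu.le ha.le).1 h))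

lemma mem_Icc_of_volterra_le {a u B : ℝ} (ha : 0 < a) (hu : 0 < u) (hB : volterra a u ≤ B) :
    u ∈ Icc (a * exp (-((B + a) / a))) ((√a + √B) ^ 2) := by
  constructor
  · have hlog : log (a / u) ≤ (B + a) / a := by
      rw [log_div ha.ne' hu.ne', le_div_iff₀ ha]
      unfold volterra at hB
      nlinarith
    have := (log_le_iff_le_exp (div_pos ha hu)).1 hlog
    rw [div_le_iff₀ hu] at this
    calc a * exp (-((B + a) / a)) ≤ exp ((B + a) / a) * u * exp (-((B + a) / a)) := by gcongr
      _ = u := by rw [mul_right_comm, ← exp_add, add_neg_cancel, exp_zero, one_mul]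
  · have hsq := (sq_sqrt_sub_sqrt_le_volterra ha hu).trans hB
    have hsub : √u - √a ≤ √B := (le_abs_self _).trans (abs_le_sqrt hsq)
    calc u = √u ^ 2 := (sq_sqrt hu.le).symm
      _ ≤ (√a + √B) ^ 2 := by gcongr; linarith

lemma volterra_antitoneOn (a : ℝ) : AntitoneOn (volterra a) (Ioc 0 a) := by
  intro u hu v hv huv
  have hlog : v * (log u - log v) ≤ u - v := by
    have := log_le_sub_one_of_pos (div_pos hu.1 hv.1)
    rw [log_div hu.1.ne' hv.1.ne'] at this
    calc v * (log u - log v) ≤ v * (u / v - 1) := by gcongr; exact hv.1.le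
      _ = u - v := by rw [mul_sub, mul_div_cancel₀ _ hv.1.ne', mul_one]
  have hmul : v * (log v - log u) ≤ a * (log v - log u) :=
    mul_le_mul_of_nonneg_right hv.2 (sub_nonneg.2 (log_le_log hu.1 huv))
  unfold volterra
  linarith

lemma continuousOn_volterra (a : ℝ) : ContinuousOn (volterra a) (Ioi 0) := by
  unfold volterra
  exact (continuousOn_id.sub continuousOn_const).sub (continuousOn_const.mul
    ((continuousOn_log.mono fun _ hu => ne_of_gt hu).sub continuousOn_const))

lemma HasDerivAt.volterra {u : ℝ → ℝ} {u' t : ℝ} (a : ℝ) (hu : HasDerivAt u u' t) (ht : 0 < u t) :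
    HasDerivAt (fun s => volterra a (u s)) (u' * (1 - a / u t)) t := by
  rw [show u' * (1 - a / u t) = u' - a * (u' / u t) by ring]
  exact (hu.sub_const a).sub (((hu.log ht.ne').sub_const (Real.log a)).const_mul a)

lemma StrictAntiOn.sub_mul_sub_neg {f : ℝ → ℝ} {s : Set ℝ} (hf : StrictAntiOn f s) {a b : ℝ}
    (ha : a ∈ s) (hb : b ∈ s) (hab : a ≠ b) : (a - b) * (f a - f b) < 0 := by
  rcases hab.lt_or_gt with h | h
  · exact mul_neg_of_neg_of_pos (sub_neg.2 h) (sub_pos.2 (hf ha hb h))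
  · exact mul_neg_of_pos_of_neg (sub_pos.2 h) (sub_neg.2 (hf hb ha h))

lemma StrictAntiOn.sub_mul_sub_nonpos {f : ℝ → ℝ} {s : Set ℝ} (hf : StrictAntiOn f s) {a b : ℝ}
    (ha : a ∈ s) (hb : b ∈ s) : (a - b) * (f a - f b) ≤ 0 := by
  rcases eq_or_ne a b with rfl | hab
  · simp
  · exact (hf.sub_mul_sub_neg ha hb hab).le

lemma antitoneOn_Ici_of_hasDerivAt_nonpos {f f' : ℝ → ℝ} {a : ℝ}
    (hf : ∀ t ≥ a, HasDerivAt f (f' t) t) (hf' : ∀ t ≥ a, f' t ≤ 0) : AntitoneOn f (Ici a) :=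
  antitoneOn_of_hasDerivWithinAt_nonpos (convex_Ici a)
    (fun t ht => (hf t ht).continuousAt.continuousWithinAt)
    (fun t ht => (hf t (interior_subset ht)).hasDerivWithinAt)
    (fun t ht => hf' t (interior_subset ht))

lemma pos_of_hasDerivAt_mul {x h : ℝ → ℝ} (hx : ∀ t ≥ 0, HasDerivAt x (x t * h t) t)
    (hh : ∀ s, BddBelow (h '' {t ∈ Icc 0 s | 0 < x t})) (h0 : 0 < x 0) : ∀ t ≥ 0, 0 < x t := by
  intro s hs
  obtain ⟨C, hC⟩ := hh s
  set b : ℝ → ℝ := fun t => x 0 / 2 * exp ((C - 1) * t)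
  have hb : ∀ t, HasDerivAt b (b t * (C - 1)) t := fun t => by
    simpa [b, mul_assoc] using
      (((hasDerivAt_id t).const_mul (C - 1)).exp).const_mul (x 0 / 2)
  have hbpos : ∀ t, 0 < b t := fun t => by positivity
  -- `b` is a lower barrier: wherever `x` touches it, `x' = x h ≥ C b > (C - 1) b = b'`.
  have hfence : ∀ t ∈ Icc 0 s, b t ≤ x t := by
    refine image_le_of_deriv_right_lt_deriv_boundary'
      (fun t _ => (hb t).continuousAt.continuousWithinAt) (fun t _ => (hb t).hasDerivWithinAt)
      (by simp [b]; linarith) (fun t ht => (hx t ht.1).continuousAt.continuousWithinAt)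
      (fun t ht => (hx t ht.1).hasDerivWithinAt) ?_
    intro t ht hbx
    have hxt : 0 < x t := hbx ▸ hbpos t
    have hCt : C ≤ h t := hC ⟨t, ⟨Ico_subset_Icc_self ht, hxt⟩, rfl⟩
    rw [← hbx] at hxt ⊢
    nlinarith
  exact (hbpos s).trans_le (hfence s ⟨hs, le_rfl⟩)

lemma exists_lt_of_hasDerivAt_comp_neg {E : Type*} [TopologicalSpace E] [T2Space E]
    {γ : ℝ → E} {V W : E → ℝ} {A : Set E} {v : ℝ} (hA : IsCompact A)
    (hV : ContinuousOn V A) (hW : ContinuousOn W A) (hγA : ∀ t ≥ 0, γ t ∈ A)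
    (hVγ : ∀ t ≥ 0, HasDerivAt (fun s => V (γ s)) (W (γ t)) t)
    (hWneg : ∀ p ∈ A, v ≤ V p → W p < 0) : ∃ t ≥ 0, V (γ t) < v := by
  by_contra! hge
  have hK : IsCompact (A ∩ V ⁻¹' Ici v) :=
    hA.of_isClosed_subset (hV.preimage_isClosed_of_isClosed hA.isClosed isClosed_Ici)
      inter_subset_left
  obtain ⟨p, ⟨hpA, hpv⟩, hpmax⟩ :=
    hK.exists_isMaxOn ⟨γ 0, hγA 0 le_rfl, hge 0 le_rfl⟩ (hW.mono inter_subset_left)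
  set δ := -W p
  have hδ : 0 < δ := neg_pos.2 (hWneg p hpA hpv)
  have hdecr : AntitoneOn (fun t => V (γ t) + δ * t) (Ici 0) := by
    refine antitoneOn_Ici_of_hasDerivAt_nonpos
      (fun t ht => (hVγ t ht).add ((hasDerivAt_id t).const_mul δ)) fun t ht => ?_
    have : W (γ t) ≤ W p := hpmax ⟨hγA t ht, hge t ht⟩
    simp only [mul_one]
    linarith
  obtain ⟨L, hL⟩ := hA.bddBelow_image hV
  set T := (V (γ 0) - L + 1) / δ
  have hT : 0 ≤ T := by
    have : L ≤ V (γ 0) := hL ⟨γ 0, hγA 0 le_rfl, rfl⟩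
    positivity
  have hLT : L ≤ V (γ T) := hL ⟨γ T, hγA T hT, rfl⟩
  have := hdecr self_mem_Ici hT hT
  simp only [mul_zero, add_zero, T, mul_div_cancel₀ _ hδ.ne'] at this
  linarith

section PredatorPrey

variable {r c q μ m : ℝ} {g : ℝ → ℝ}

lemma exists_equilibrium {K : ℝ} (hr : 0 < r) (hc : 0 < c) (hq : 0 < q)
    (hμ : 0 < μ) (hm : 0 < m) (hgc : ContinuousOn g (Ioi 0)) (hg : StrictAntiOn g (Ioi 0))
    (hgK : g K = 0) (hthr : μ / (c * q) < K) :
    ∃ xs ys, 0 < xs ∧ 0 < ys ∧ q * ys = r * g xs ∧ c * q * xs - μ - m * ys = 0 := by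
  have ha : 0 < μ / (c * q) := by positivity
  have hK : 0 < K := ha.trans hthr
  have hg_pos : ∀ z ∈ Ioo 0 K, 0 < g z := fun z hz => hgK ▸ hg hz.1 hK hz.2
  set F := fun z => c * q * z - μ - m * (r * g z / q)
  have hFa : F (μ / (c * q)) < 0 := by
    have : 0 < m * (r * g (μ / (c * q)) / q) := by
      have := hg_pos _ ⟨ha, hthr⟩
      positivity
    have h1 : c * q * (μ / (c * q)) = μ := mul_div_cancel₀ _ (by positivity)
    simp only [F, h1]
    linarith
  have hFK : 0 < F K := by
    simp only [F, hgK, mul_zero, zero_div, sub_zero]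
    linarith [(div_lt_iff₀ (by positivity)).1 hthr]
  have hFc : ContinuousOn F (Icc (μ / (c * q)) K) :=
    ((continuousOn_const.mul continuousOn_id).sub continuousOn_const).sub
      (continuousOn_const.mul ((continuousOn_const.mul
        (hgc.mono fun z hz => ha.trans_le hz.1)).div_const q))
  obtain ⟨xs, hxs, hFxs⟩ := intermediate_value_Ioo hthr.le hFc ⟨hFa, hFK⟩
  have hxs0 : 0 < xs := ha.trans hxs.1
  have hgxs := hg_pos xs ⟨hxs0, hxs.2⟩
  refine ⟨xs, r * g xs / q, hxs0, by positivity, by field_simp, hFxs⟩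

lemma solution_pos {x y : ℝ → ℝ} (hr : 0 < r) (hq : 0 < q) (hg : StrictAntiOn g (Ioi 0))
    (hx : ∀ t ≥ (0:ℝ), HasDerivAt x (x t * (r * g (x t) - q * y t)) t)
    (hy : ∀ t ≥ (0:ℝ), HasDerivAt y (y t * (c * q * x t - μ - m * y t)) t)
    (hx0 : 0 < x 0) (hy0 : 0 < y 0) : (∀ t ≥ 0, 0 < x t) ∧ (∀ t ≥ 0, 0 < y t) := by
  have hcont : ∀ {z : ℝ → ℝ} {z' : ℝ → ℝ}, (∀ t ≥ 0, HasDerivAt z (z' t) t) → ∀ s,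
      ContinuousOn z (Icc 0 s) := fun hz _ t ht => (hz t ht.1).continuousAt.continuousWithinAt
  refine ⟨pos_of_hasDerivAt_mul hx (fun s => ?_) hx0, pos_of_hasDerivAt_mul hy (fun s => ?_) hy0⟩
  · obtain ⟨Mx, hMx⟩ := isCompact_Icc.bddAbove_image (hcont hx s)
    obtain ⟨My, hMy⟩ := isCompact_Icc.bddAbove_image (hcont hy s)
    refine ⟨r * g Mx - q * My, ?_⟩
    rintro _ ⟨t, ⟨ht, hxt⟩, rfl⟩
    have hxM : x t ≤ Mx := hMx (mem_image_of_mem x ht)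
    have hgM : g Mx ≤ g (x t) := hg.antitoneOn hxt (hxt.trans_le hxM) hxM
    have hyM : y t ≤ My := hMy (mem_image_of_mem y ht)
    dsimp only
    linarith [mul_le_mul_of_nonneg_left hgM hr.le, mul_le_mul_of_nonneg_left hyM hq.le]
  · exact (isCompact_Icc.bddBelow_image (((continuousOn_const.mul (hcont hx s)).sub
      continuousOn_const).sub (continuousOn_const.mul (hcont hy s)))).mono
      (image_mono fun t ht => ht.1)

noncomputable def lyapunov (c xs ys : ℝ) (p : ℝ × ℝ) : ℝ := c * volterra xs p.1 + volterra ys p.2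

def lyapunovDeriv (r c m : ℝ) (g : ℝ → ℝ) (xs ys : ℝ) (p : ℝ × ℝ) : ℝ :=
  c * r * (p.1 - xs) * (g p.1 - g xs) - m * (p.2 - ys) ^ 2

variable {xs ys : ℝ}

lemma hasDerivAt_lyapunov {x y : ℝ → ℝ} {t : ℝ}
    (hx : HasDerivAt x (x t * (r * g (x t) - q * y t)) t)
    (hy : HasDerivAt y (y t * (c * q * x t - μ - m * y t)) t) (hxt : 0 < x t) (hyt : 0 < y t)
    (hqy : q * ys = r * g xs) (hxy : c * q * xs - μ - m * ys = 0) :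
    HasDerivAt (fun s => lyapunov c xs ys (x s, y s))
      (lyapunovDeriv r c m g xs ys (x t, y t)) t := by
  refine (((hx.volterra xs hxt).const_mul c).add (hy.volterra ys hyt)).congr_deriv ?_
  simp only [lyapunovDeriv]
  field_simp
  linear_combination (y t - ys) * hxy - c * (x t - xs) * hqy

lemma lyapunovDeriv_nonpos (hr : 0 < r) (hc : 0 < c) (hm : 0 < m) (hg : StrictAntiOn g (Ioi 0))
    (hxs : 0 < xs) {p : ℝ × ℝ} (hp : 0 < p.1) : lyapunovDeriv r c m g xs ys p ≤ 0 := by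
  have := mul_nonpos_of_nonneg_of_nonpos (mul_pos hc hr).le (hg.sub_mul_sub_nonpos hp hxs)
  have := mul_nonneg hm.le (sq_nonneg (p.2 - ys))
  simp only [lyapunovDeriv]
  linarith

lemma lyapunovDeriv_neg (hr : 0 < r) (hc : 0 < c) (hm : 0 < m) (hg : StrictAntiOn g (Ioi 0))
    (hxs : 0 < xs) {p : ℝ × ℝ} (hp : 0 < p.1) (hne : p ≠ (xs, ys)) :
    lyapunovDeriv r c m g xs ys p < 0 := by
  have hx := mul_nonpos_of_nonneg_of_nonpos (mul_pos hc hr).le (hg.sub_mul_sub_nonpos hp hxs)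
  have hy := mul_nonneg hm.le (sq_nonneg (p.2 - ys))
  simp only [lyapunovDeriv]
  rcases eq_or_ne p.1 xs with h1 | h1
  · have h2 : p.2 ≠ ys := fun h2 => hne (Prod.ext h1 h2)
    have := mul_pos hm (pow_two_pos_of_ne_zero (sub_ne_zero.2 h2))
    rw [h1]
    linarith
  · have := mul_neg_of_pos_of_neg (mul_pos hc hr) (hg.sub_mul_sub_neg hp hxs h1)
    linarith

lemma continuousOn_lyapunov : ContinuousOn (lyapunov c xs ys) (Ioi 0 ×ˢ Ioi 0) :=
  (continuousOn_const.mul ((continuousOn_volterra xs).comp continuousOn_fst fun _ hp => hp.1)).add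
    ((continuousOn_volterra ys).comp continuousOn_snd fun _ hp => hp.2)

lemma continuousOn_lyapunovDeriv (hgc : ContinuousOn g (Ioi 0)) :
    ContinuousOn (lyapunovDeriv r c m g xs ys) (Ioi 0 ×ˢ Ioi 0) :=
  ((continuousOn_const.mul (continuousOn_fst.sub continuousOn_const)).mul
    ((hgc.comp continuousOn_fst fun _ hp => hp.1).sub continuousOn_const)).sub
    (continuousOn_const.mul ((continuousOn_snd.sub continuousOn_const).pow 2))

lemma exists_isCompact_lyapunov_sublevel (hc : 0 < c) (hxs : 0 < xs) (hys : 0 < ys) (B : ℝ) :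
    ∃ A, IsCompact A ∧ A ⊆ Ioi 0 ×ˢ Ioi 0 ∧
      ∀ p ∈ Ioi (0:ℝ) ×ˢ Ioi (0:ℝ), lyapunov c xs ys p ≤ B → p ∈ A := by
  refine ⟨Icc (xs * exp (-((B / c + xs) / xs))) ((√xs + √(B / c)) ^ 2) ×ˢ
    Icc (ys * exp (-((B + ys) / ys))) ((√ys + √B) ^ 2), isCompact_Icc.prod isCompact_Icc,
    fun p hp => ⟨(by positivity : (0:ℝ) < _).trans_le hp.1.1,
      (by positivity : (0:ℝ) < _).trans_le hp.2.1⟩,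
    fun p hp hB => ?_⟩
  have hx := volterra_nonneg hxs hp.1
  have hy := volterra_nonneg hys hp.2
  unfold lyapunov at hB
  refine ⟨mem_Icc_of_volterra_le hxs hp.1 ?_, mem_Icc_of_volterra_le hys hp.2 (by nlinarith)⟩
  rw [le_div_iff₀ hc]
  linarith

lemma lt_of_lyapunov_lt (hc : 0 < c) {ε : ℝ} (hε : 0 < ε) (hεx : ε ≤ xs) (hεy : ε ≤ ys)
    {p : ℝ × ℝ} (hp : p ∈ Ioi (0:ℝ) ×ˢ Ioi (0:ℝ))
    (hV : lyapunov c xs ys p < min (c * volterra xs ε) (volterra ys ε)) : ε < p.1 ∧ ε < p.2 := by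
  have hx := volterra_nonneg (hε.trans_le hεx) hp.1
  have hy := volterra_nonneg (hε.trans_le hεy) hp.2
  unfold lyapunov at hV
  constructor <;> by_contra! hle
  · have := volterra_antitoneOn xs ⟨hp.1, hle.trans hεx⟩ ⟨hε, hεx⟩ hle
    have := min_le_left (c * volterra xs ε) (volterra ys ε)
    nlinarith
  · have := volterra_antitoneOn ys ⟨hp.2, hle.trans hεy⟩ ⟨hε, hεy⟩ hle
    have := min_le_right (c * volterra xs ε) (volterra ys ε)
    nlinarith

lemma lyapunov_antitoneOn (hr : 0 < r) (hc : 0 < c) (hm : 0 < m) (hg : StrictAntiOn g (Ioi 0))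
    (hxs : 0 < xs) {x y : ℝ → ℝ} (hx : ∀ t ≥ 0, 0 < x t)
    (hV : ∀ t ≥ 0, HasDerivAt (fun s => lyapunov c xs ys (x s, y s))
      (lyapunovDeriv r c m g xs ys (x t, y t)) t) :
    AntitoneOn (fun t => lyapunov c xs ys (x t, y t)) (Ici 0) :=
  antitoneOn_Ici_of_hasDerivAt_nonpos hV fun t ht => lyapunovDeriv_nonpos hr hc hm hg hxs (hx t ht)

lemma exists_isCompact_trajectory (hr : 0 < r) (hc : 0 < c) (hm : 0 < m)
    (hg : StrictAntiOn g (Ioi 0)) (hxs : 0 < xs) (hys : 0 < ys) {x y : ℝ → ℝ}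
    (hx : ∀ t ≥ 0, 0 < x t) (hy : ∀ t ≥ 0, 0 < y t)
    (hV : ∀ t ≥ 0, HasDerivAt (fun s => lyapunov c xs ys (x s, y s))
      (lyapunovDeriv r c m g xs ys (x t, y t)) t) :
    ∃ A, IsCompact A ∧ A ⊆ Ioi 0 ×ˢ Ioi 0 ∧ ∀ t ≥ 0, (x t, y t) ∈ A := by
  obtain ⟨A, hA, hAq, hsub⟩ := exists_isCompact_lyapunov_sublevel hc hxs hys
    (lyapunov c xs ys (x 0, y 0))
  exact ⟨A, hA, hAq, fun t ht => hsub _ ⟨hx t ht, hy t ht⟩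
    (lyapunov_antitoneOn hr hc hm hg hxs hx hV self_mem_Ici ht ht)⟩

lemma eventually_lyapunov_lt (hr : 0 < r) (hc : 0 < c) (hm : 0 < m)
    (hg : StrictAntiOn g (Ioi 0)) (hgc : ContinuousOn g (Ioi 0)) (hxs : 0 < xs)
    {x y : ℝ → ℝ} {A : Set (ℝ × ℝ)} (hA : IsCompact A) (hAq : A ⊆ Ioi 0 ×ˢ Ioi 0)
    (hγA : ∀ t ≥ 0, (x t, y t) ∈ A)
    (hV : ∀ t ≥ 0, HasDerivAt (fun s => lyapunov c xs ys (x s, y s))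
      (lyapunovDeriv r c m g xs ys (x t, y t)) t) {v : ℝ} (hv : 0 < v) :
    ∀ᶠ t in atTop, lyapunov c xs ys (x t, y t) < v := by
  have hneg : ∀ p ∈ A, v ≤ lyapunov c xs ys p → lyapunovDeriv r c m g xs ys p < 0 := by
    refine fun p hp hvp => lyapunovDeriv_neg hr hc hm hg hxs (hAq hp).1 ?_
    rintro rfl
    simp only [lyapunov, volterra_self, mul_zero, add_zero] at hvp
    linarith
  obtain ⟨t₀, ht₀, hlt⟩ := exists_lt_of_hasDerivAt_comp_neg hA (continuousOn_lyapunov.mono hAq)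
    ((continuousOn_lyapunovDeriv hgc).mono hAq) hγA hV hneg
  have hanti := lyapunov_antitoneOn hr hc hm hg hxs (fun t ht => (hAq (hγA t ht)).1) hV
  exact eventually_atTop.2 ⟨t₀, fun t ht => (hanti ht₀ (ht₀.trans ht) ht).trans_lt hlt⟩

end PredatorPrey

theorem statement0_general
    (r K c q μ m : ℝ) (hr : 0 < r) (hc : 0 < c) (hq : 0 < q)
    (hμ : 0 < μ) (hm : 0 < m)
    (g g' : ℝ → ℝ)
    (hg : ∀ x > (0:ℝ), HasDerivAt g (g' x) x)
    (hg' : ∀ x > (0:ℝ), g' x < 0)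
    (hgK : g K = 0)
    (hthr : μ / (c * q) < K) :
    ∃ ε > (0:ℝ), ∀ x y : ℝ → ℝ,
      (∀ t ≥ (0:ℝ), HasDerivAt x (x t * (r * g (x t) - q * y t)) t) →
      (∀ t ≥ (0:ℝ), HasDerivAt y (y t * (c * q * x t - μ - m * y t)) t) →
      0 < x 0 → 0 < y 0 →
      ε < Filter.liminf (fun t => min (x t) (y t)) atTop := by
  have hgc : ContinuousOn g (Ioi 0) := fun z hz => (hg z hz).continuousAt.continuousWithinAt
  have hanti : StrictAntiOn g (Ioi 0) := strictAntiOn_of_hasDerivWithinAt_neg (convex_Ioi 0) hgc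
    (fun z hz => (hg z (interior_subset hz)).hasDerivWithinAt)
    fun z hz => hg' z (interior_subset hz)
  obtain ⟨xs, ys, hxs, hys, hqy, hxy⟩ := exists_equilibrium hr hc hq hμ hm hgc hanti hgK hthr
  refine ⟨min xs ys / 2 / 2, by positivity, fun x y hx hy hx0 hy0 => ?_⟩
  obtain ⟨hxpos, hypos⟩ := solution_pos hr hq hanti hx hy hx0 hy0
  have hV : ∀ t ≥ 0, HasDerivAt (fun s => lyapunov c xs ys (x s, y s))
      (lyapunovDeriv r c m g xs ys (x t, y t)) t := fun t ht =>
    hasDerivAt_lyapunov (hx t ht) (hy t ht) (hxpos t ht) (hypos t ht) hqy hxy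
  obtain ⟨A, hA, hAq, hγA⟩ := exists_isCompact_trajectory hr hc hm hanti hxs hys hxpos hypos hV
  set ε := min xs ys / 2
  have hε : 0 < ε := by positivity
  have hεx : ε < xs := (half_lt_self (lt_min hxs hys)).trans_le (min_le_left _ _)
  have hεy : ε < ys := (half_lt_self (lt_min hxs hys)).trans_le (min_le_right _ _)
  have hlow : ∀ᶠ t in atTop, ε ≤ min (x t) (y t) := by
    filter_upwards [eventually_ge_atTop 0, eventually_lyapunov_lt hr hc hm hanti hgc hxs hA hAq
      hγA hV (lt_min (mul_pos hc (volterra_pos hxs hε hεx.ne)) (volterra_pos hys hε hεy.ne))]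
      with t ht hlt
    obtain ⟨h1, h2⟩ := lt_of_lyapunov_lt hc hε hεx.le hεy.le (hAq (hγA t ht)) hlt
    exact le_min h1.le h2.le
  have hbdd : IsBoundedUnder (· ≤ ·) atTop (fun t => min (x t) (y t)) := by
    obtain ⟨M, hM⟩ := hA.bddAbove_image continuous_fst.continuousOn
    exact isBoundedUnder_of_eventually_le (a := M) (eventually_atTop.2
      ⟨0, fun t ht => (min_le_left _ _).trans (hM ⟨_, hγA t ht, rfl⟩)⟩)
  exact (half_lt_self hε).trans_le (le_liminf_of_le hbdd.isCoboundedUnder_ge hlow)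

/-- Uniform persistence of the planar system (2.1) with `n = 1`:
`ẋ = x (r g(x) − q y)`, `ẏ = y (c q x − μ − m y)`. -/
theorem statement0
    (r K c q μ m : ℝ) (hr : 0 < r) (hK : 0 < K) (hc : 0 < c) (hq : 0 < q)
    (hμ : 0 < μ) (hm : 0 < m)
    (g g' : ℝ → ℝ)
    (hg : ∀ x > (0:ℝ), HasDerivAt g (g' x) x)
    (hg' : ∀ x > (0:ℝ), g' x < 0)
    (hgK : g K = 0)
    (hthr : μ / (c * q) < K)
    (β : ℝ) (hβ : 0 < β)
    (hlim : Tendsto (fun x => x * g' x + g x) (nhdsWithin 0 (Set.Ioi 0)) (nhds β)) :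
    ∃ ε > (0:ℝ), ∀ x y : ℝ → ℝ,
      (∀ t ≥ (0:ℝ), HasDerivAt x (x t * (r * g (x t) - q * y t)) t) →
      (∀ t ≥ (0:ℝ), HasDerivAt y (y t * (c * q * x t - μ - m * y t)) t) →
      0 < x 0 → 0 < y 0 →
      ε < Filter.liminf (fun t => min (x t) (y t)) atTop :=
  statement0_general r K c q μ m hr hc hq hμ hm g g' hg hg' hgK hthr
end

section
/- System (3.1) is dissipative: fix φ ∈ (0, min{μ₁, μ₂}] and set ρ = K(r + φ)²/(4r). Then every solution (x(t), y(t), z(t)) of (3.1) defined for all t ≥ 0 with nonnegative coordinates satisfies limsup_{t→∞} (x(t) + c₁⁻¹·y(t) + c₂⁻¹·z(t)) ≤ ρ/φ. In particular, there is a compact subset C of [0,∞)³ such that every nonnegative solution eventually enters and remains in C. -/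
/-!
Along a nonnegative solution, `W = x + y/c₁ + z/c₂` cancels the predation terms, so
`W' + φ W = (r + φ) x - r x²/K + (y/c₁)(φ - μ₁ - m₁ y) + (z/c₂)(φ - μ₂ - m₂ z) ≤ ρ`
by completing the square in `x` and `φ ≤ μᵢ`. Grönwall's inequality then gives
`W t ≤ ρ/φ + (W 0 - ρ/φ) e^{-φt}`, whence the `limsup` bound, and the box
`[0, ρ/φ + 1] × [0, c₁(ρ/φ + 1)] × [0, c₂(ρ/φ + 1)]` is absorbing.
-/

/-- A nonnegative solution of system (3.1). -/
def IsNonnegSol31 (r K q₁ q₂ a₁ a₂ c₁ c₂ μ₁ μ₂ m₁ m₂ : ℝ)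
    (x y z : ℝ → ℝ) : Prop :=
  (∀ t ≥ (0:ℝ), 0 ≤ x t ∧ 0 ≤ y t ∧ 0 ≤ z t) ∧
  (∀ t ≥ (0:ℝ), HasDerivAt x
    (x t * (r * (1 - x t / K) - q₁ * y t / (1 + a₁ * x t)
      - q₂ * z t / (1 + a₂ * x t))) t) ∧
  (∀ t ≥ (0:ℝ), HasDerivAt y
    (y t * (c₁ * q₁ * x t / (1 + a₁ * x t) - μ₁ - m₁ * y t)) t) ∧
  (∀ t ≥ (0:ℝ), HasDerivAt z
    (z t * (c₂ * q₂ * x t / (1 + a₂ * x t) - μ₂ - m₂ * z t)) t)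

open Filter Set Real Topology

theorem le_of_hasDerivAt_add_mul_le {f f' : ℝ → ℝ} {φ ρ : ℝ} (hφ : φ ≠ 0)
    (hf : ∀ t ≥ (0:ℝ), HasDerivAt f (f' t) t) (hbound : ∀ t ≥ (0:ℝ), f' t + φ * f t ≤ ρ)
    {t : ℝ} (ht : 0 ≤ t) : f t ≤ ρ / φ + (f 0 - ρ / φ) * exp (-(φ * t)) := by
  have h := le_gronwallBound_of_liminf_deriv_right_le (f := f) (f' := f') (δ := f 0) (K := -φ)
    (ε := ρ) (a := 0) (b := t)
    (fun s hs => (hf s hs.1).continuousAt.continuousWithinAt)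
    (fun s hs _ hr => (hf s hs.1).hasDerivWithinAt.liminf_right_slope_le hr) le_rfl
    (fun s hs => by linarith [hbound s hs.1]) t ⟨ht, le_rfl⟩
  rw [gronwallBound_of_K_ne_0 (neg_ne_zero.2 hφ)] at h
  convert h using 1
  simp only [sub_zero, neg_mul, div_neg]
  ring

theorem tendsto_add_mul_exp_neg_mul {φ : ℝ} (hφ : 0 < φ) (L A : ℝ) :
    Tendsto (fun t => L + A * exp (-(φ * t))) atTop (𝓝 L) := by
  have h : Tendsto (fun t => exp (-(φ * t))) atTop (𝓝 0) :=
    tendsto_exp_neg_atTop_nhds_zero.comp (tendsto_id.const_mul_atTop hφ)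
  simpa using tendsto_const_nhds.add (h.const_mul A)

theorem limsup_le_of_eventually_le_of_tendsto {α : Type*} {l : Filter α} [l.NeBot]
    {f g : α → ℝ} {L : ℝ} (hf : l.IsBoundedUnder (· ≥ ·) f) (hfg : f ≤ᶠ[l] g)
    (hg : Tendsto g l (𝓝 L)) : limsup f l ≤ L :=
  hg.limsup_eq ▸ limsup_le_limsup hfg hf.isCoboundedUnder_le hg.isBoundedUnder_le

theorem mul_sub_mul_sq_div_le {r K : ℝ} (hr : 0 < r) (hK : 0 < K) (s X : ℝ) :
    s * X - r * X ^ 2 / K ≤ K * s ^ 2 / (4 * r) := by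
  have h : K * s ^ 2 / (4 * r) - (s * X - r * X ^ 2 / K)
      = (2 * r * X - K * s) ^ 2 / (4 * r * K) := by
    field_simp
    ring
  have : 0 ≤ (2 * r * X - K * s) ^ 2 / (4 * r * K) := by positivity
  linarith

theorem div_mul_sub_sub_mul_nonpos {c μ m φ Y : ℝ} (hc : 0 < c) (hm : 0 ≤ m) (hφ : φ ≤ μ)
    (hY : 0 ≤ Y) : Y / c * (φ - μ - m * Y) ≤ 0 :=
  mul_nonpos_of_nonneg_of_nonpos (by positivity) (by nlinarith)

theorem lyapunov_deriv_add_mul_le {r K q₁ q₂ a₁ a₂ c₁ c₂ μ₁ μ₂ m₁ m₂ φ : ℝ}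
    (hr : 0 < r) (hK : 0 < K) (ha₁ : 0 ≤ a₁) (ha₂ : 0 ≤ a₂) (hc₁ : 0 < c₁) (hc₂ : 0 < c₂)
    (hm₁ : 0 ≤ m₁) (hm₂ : 0 ≤ m₂) (hφμ₁ : φ ≤ μ₁) (hφμ₂ : φ ≤ μ₂)
    {X Y Z : ℝ} (hX : 0 ≤ X) (hY : 0 ≤ Y) (hZ : 0 ≤ Z) :
    X * (r * (1 - X / K) - q₁ * Y / (1 + a₁ * X) - q₂ * Z / (1 + a₂ * X))
      + Y * (c₁ * q₁ * X / (1 + a₁ * X) - μ₁ - m₁ * Y) / c₁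
      + Z * (c₂ * q₂ * X / (1 + a₂ * X) - μ₂ - m₂ * Z) / c₂
      + φ * (X + Y / c₁ + Z / c₂) ≤ K * (r + φ) ^ 2 / (4 * r) := by
  have hD₁ : 1 + a₁ * X ≠ 0 := by positivity
  have hD₂ : 1 + a₂ * X ≠ 0 := by positivity
  have hcancel :
      X * (r * (1 - X / K) - q₁ * Y / (1 + a₁ * X) - q₂ * Z / (1 + a₂ * X))
        + Y * (c₁ * q₁ * X / (1 + a₁ * X) - μ₁ - m₁ * Y) / c₁
        + Z * (c₂ * q₂ * X / (1 + a₂ * X) - μ₂ - m₂ * Z) / c₂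
        + φ * (X + Y / c₁ + Z / c₂)
      = ((r + φ) * X - r * X ^ 2 / K)
        + Y / c₁ * (φ - μ₁ - m₁ * Y) + Z / c₂ * (φ - μ₂ - m₂ * Z) := by
    field_simp
    ring
  rw [hcancel]
  linarith [mul_sub_mul_sq_div_le hr hK (r + φ) X,
    div_mul_sub_sub_mul_nonpos hc₁ hm₁ hφμ₁ hY, div_mul_sub_sub_mul_nonpos hc₂ hm₂ hφμ₂ hZ]

namespace IsNonnegSol31

variable {r K q₁ q₂ a₁ a₂ c₁ c₂ μ₁ μ₂ m₁ m₂ : ℝ} {x y z : ℝ → ℝ}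

theorem weightedSum_nonneg (h : IsNonnegSol31 r K q₁ q₂ a₁ a₂ c₁ c₂ μ₁ μ₂ m₁ m₂ x y z)
    (hc₁ : 0 < c₁) (hc₂ : 0 < c₂) {t : ℝ} (ht : 0 ≤ t) : 0 ≤ x t + y t / c₁ + z t / c₂ := by
  obtain ⟨hx, hy, hz⟩ := h.1 t ht
  positivity

theorem weightedSum_le (h : IsNonnegSol31 r K q₁ q₂ a₁ a₂ c₁ c₂ μ₁ μ₂ m₁ m₂ x y z)
    (hr : 0 < r) (hK : 0 < K) (ha₁ : 0 ≤ a₁) (ha₂ : 0 ≤ a₂) (hc₁ : 0 < c₁) (hc₂ : 0 < c₂)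
    (hm₁ : 0 ≤ m₁) (hm₂ : 0 ≤ m₂) {φ : ℝ} (hφ : φ ≠ 0) (hφμ₁ : φ ≤ μ₁) (hφμ₂ : φ ≤ μ₂)
    {t : ℝ} (ht : 0 ≤ t) :
    x t + y t / c₁ + z t / c₂ ≤ K * (r + φ) ^ 2 / (4 * r) / φ
      + (x 0 + y 0 / c₁ + z 0 / c₂ - K * (r + φ) ^ 2 / (4 * r) / φ) * exp (-(φ * t)) := by
  obtain ⟨hpos, hx, hy, hz⟩ := h
  refine le_of_hasDerivAt_add_mul_le hφ
    (fun s hs => ((hx s hs).add ((hy s hs).div_const c₁)).add ((hz s hs).div_const c₂))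
    (fun s hs => ?_) ht
  obtain ⟨hxs, hys, hzs⟩ := hpos s hs
  exact lyapunov_deriv_add_mul_le hr hK ha₁ ha₂ hc₁ hc₂ hm₁ hm₂ hφμ₁ hφμ₂ hxs hys hzs

end IsNonnegSol31

theorem mem_box_of_add_div_add_div_le {c₁ c₂ M X Y Z : ℝ} (hc₁ : 0 < c₁) (hc₂ : 0 < c₂)
    (hX : 0 ≤ X) (hY : 0 ≤ Y) (hZ : 0 ≤ Z) (hM : X + Y / c₁ + Z / c₂ ≤ M) :
    (X, Y, Z) ∈ Icc 0 M ×ˢ Icc 0 (c₁ * M) ×ˢ Icc 0 (c₂ * M) := by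
  have hYc : 0 ≤ Y / c₁ := by positivity
  have hZc : 0 ≤ Z / c₂ := by positivity
  refine ⟨⟨hX, by linarith⟩, ⟨hY, ?_⟩, ⟨hZ, ?_⟩⟩
  · exact (div_le_iff₀' hc₁).mp (by linarith)
  · exact (div_le_iff₀' hc₂).mp (by linarith)

theorem statement4_general
    (r K q₁ q₂ a₁ a₂ c₁ c₂ μ₁ μ₂ m₁ m₂ : ℝ)
    (hr : 0 < r) (hK : 0 < K)
    (ha₁ : 0 < a₁) (ha₂ : 0 < a₂) (hc₁ : 0 < c₁) (hc₂ : 0 < c₂)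
    (hm₁ : 0 < m₁) (hm₂ : 0 < m₂)
    (φ : ℝ) (hφ₁ : 0 < φ) (hφ₂ : φ ≤ min μ₁ μ₂)
    (ρ : ℝ) (hρ : ρ = K * (r + φ) ^ 2 / (4 * r)) :
    (∀ x y z : ℝ → ℝ,
      IsNonnegSol31 r K q₁ q₂ a₁ a₂ c₁ c₂ μ₁ μ₂ m₁ m₂ x y z →
      Filter.limsup (fun t => x t + y t / c₁ + z t / c₂) atTop ≤ ρ / φ) ∧
    ∃ C : Set (ℝ × ℝ × ℝ), IsCompact C ∧
      C ⊆ {p : ℝ × ℝ × ℝ | 0 ≤ p.1 ∧ 0 ≤ p.2.1 ∧ 0 ≤ p.2.2} ∧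
      ∀ x y z : ℝ → ℝ,
        IsNonnegSol31 r K q₁ q₂ a₁ a₂ c₁ c₂ μ₁ μ₂ m₁ m₂ x y z →
        ∃ T > (0:ℝ), ∀ t ≥ T, (x t, y t, z t) ∈ C := by
  subst hρ
  set L := K * (r + φ) ^ 2 / (4 * r) / φ
  have hbound (x y z : ℝ → ℝ) (h : IsNonnegSol31 r K q₁ q₂ a₁ a₂ c₁ c₂ μ₁ μ₂ m₁ m₂ x y z) :
      ∃ g : ℝ → ℝ, Tendsto g atTop (𝓝 L) ∧ ∀ t ≥ 0, x t + y t / c₁ + z t / c₂ ≤ g t :=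
    ⟨_, tendsto_add_mul_exp_neg_mul hφ₁ _ _, fun t ht =>
      h.weightedSum_le hr hK ha₁.le ha₂.le hc₁ hc₂ hm₁.le hm₂.le hφ₁.ne'
        (hφ₂.trans (min_le_left _ _)) (hφ₂.trans (min_le_right _ _)) ht⟩
  refine ⟨fun x y z h => ?_, Icc 0 (L + 1) ×ˢ Icc 0 (c₁ * (L + 1)) ×ˢ Icc 0 (c₂ * (L + 1)),
    isCompact_Icc.prod (isCompact_Icc.prod isCompact_Icc),
    fun p hp => ⟨hp.1.1, hp.2.1.1, hp.2.2.1⟩, fun x y z h => ?_⟩ <;>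
    obtain ⟨g, hg, hWg⟩ := hbound x y z h
  · exact limsup_le_of_eventually_le_of_tendsto
      ⟨0, eventually_map.2 <| (eventually_ge_atTop 0).mono fun t => h.weightedSum_nonneg hc₁ hc₂⟩
      ((eventually_ge_atTop 0).mono hWg) hg
  · obtain ⟨T, hT⟩ := eventually_atTop.1
      ((eventually_ge_atTop 0).and (hg.eventually (gt_mem_nhds (lt_add_one L))))
    refine ⟨max T 1, by positivity, fun t ht => ?_⟩
    obtain ⟨ht₀, hgt⟩ := hT t (le_of_max_le_left ht)
    obtain ⟨hx, hy, hz⟩ := h.1 t ht₀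
    exact mem_box_of_add_div_add_div_le hc₁ hc₂ hx hy hz ((hWg t ht₀).trans hgt.le)

/-- Theorem 3.5: system (3.1) is dissipative. -/
theorem statement4
    (r K q₁ q₂ a₁ a₂ c₁ c₂ μ₁ μ₂ m₁ m₂ : ℝ)
    (hr : 0 < r) (hK : 0 < K) (hq₁ : 0 < q₁) (hq₂ : 0 < q₂)
    (ha₁ : 0 < a₁) (ha₂ : 0 < a₂) (hc₁ : 0 < c₁) (hc₂ : 0 < c₂)
    (hμ₁ : 0 < μ₁) (hμ₂ : 0 < μ₂) (hm₁ : 0 < m₁) (hm₂ : 0 < m₂)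
    (φ : ℝ) (hφ₁ : 0 < φ) (hφ₂ : φ ≤ min μ₁ μ₂)
    (ρ : ℝ) (hρ : ρ = K * (r + φ) ^ 2 / (4 * r)) :
    (∀ x y z : ℝ → ℝ,
      IsNonnegSol31 r K q₁ q₂ a₁ a₂ c₁ c₂ μ₁ μ₂ m₁ m₂ x y z →
      Filter.limsup (fun t => x t + y t / c₁ + z t / c₂) atTop ≤ ρ / φ) ∧
    ∃ C : Set (ℝ × ℝ × ℝ), IsCompact C ∧
      C ⊆ {p : ℝ × ℝ × ℝ | 0 ≤ p.1 ∧ 0 ≤ p.2.1 ∧ 0 ≤ p.2.2} ∧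
      ∀ x y z : ℝ → ℝ,
        IsNonnegSol31 r K q₁ q₂ a₁ a₂ c₁ c₂ μ₁ μ₂ m₁ m₂ x y z →
        ∃ T > (0:ℝ), ∀ t ≥ T, (x t, y t, z t) ∈ C :=
  statement4_general r K q₁ q₂ a₁ a₂ c₁ c₂ μ₁ μ₂ m₁ m₂ hr hK ha₁ ha₂ hc₁ hc₂ hm₁ hm₂ φ hφ₁ hφ₂ ρ hρ
end

section
/- Consider system (3.1) with all parameters positive, c₁q₁ − a₁μ₁ > 0, and y^b = μ₁/(c₁q₁ − a₁μ₁). If 0 < y^b < K, then there exist x₁ > 0 and y₁ > 0 such that r(1 − x₁/K) − q₁y₁/(1 + a₁x₁) = 0 and c₁q₁x₁/(1 + a₁x₁) − μ₁ − m₁y₁ = 0; that is, (x₁, y₁, 0) is an equilibrium of (3.1). Moreover, if (K − 1/a₁)/2 ≤ y^b < K, then this pair (x₁, y₁) is unique. -/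
/-!
Equilibria with `z = 0` are the crossings of the prey nullcline
`y = r (1 - x/K) (1 + a₁ x) / q₁`, a downward parabola with vertex at `x = (K - 1/a₁)/2`
vanishing at `x = K`, and the consumer nullcline `y = (c₁ q₁ x / (1 + a₁ x) - μ₁) / m₁`,
which is strictly increasing and vanishes at `x = y^b`. On `[y^b, K]` the parabola starts
above and ends below the consumer nullcline, so they cross at some `y^b < x₁ < K` with `y₁ > 0`.
Conversely `y > 0` forces `x > y^b`, and if `y^b ≥ (K - 1/a₁)/2` the parabola is decreasing
there, so it meets the increasing consumer nullcline at most once.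
-/

open Set

theorem eq_of_strictAntiOn_of_strictMonoOn {α β : Type*} [LinearOrder α] [Preorder β]
    {f g : α → β} {s : Set α} (hf : StrictAntiOn f s) (hg : StrictMonoOn g s)
    {x x' : α} (hx : x ∈ s) (hx' : x' ∈ s) (hfgx : f x = g x) (hfgx' : f x' = g x') :
    x = x' := by
  rcases lt_trichotomy x x' with h | h | h
  · exact ((((hf hx hx' h).trans_eq hfgx).trans (hg hx hx' h)).ne hfgx').elim
  · exact h
  · exact ((((hf hx' hx h).trans_eq hfgx').trans (hg hx' hx h)).ne hfgx).elim

theorem strictMonoOn_mul_div_one_add_mul {k a : ℝ} (hk : 0 < k) (ha : 0 ≤ a) :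
    StrictMonoOn (fun x => k * x / (1 + a * x)) (Ici 0) := by
  intro s hs t ht hst
  have hs' : 0 < 1 + a * s := by nlinarith [mem_Ici.1 hs]
  have ht' : 0 < 1 + a * t := by nlinarith [mem_Ici.1 ht]
  rw [div_lt_div_iff₀ hs' ht']
  nlinarith

theorem strictAntiOn_sub_mul_one_add_mul {K a : ℝ} (ha : 0 < a) :
    StrictAntiOn (fun x => (K - x) * (1 + a * x)) (Ici ((K - 1 / a) / 2)) := by
  intro s hs t ht hst
  have hsum : a * K - 1 < a * (s + t) := by
    have : K - 1 / a < s + t := by linarith [mem_Ici.1 hs, mem_Ici.1 ht]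
    calc a * K - 1 = a * (K - 1 / a) := by field_simp
      _ < a * (s + t) := by gcongr
  have hdiff : (K - s) * (1 + a * s) - (K - t) * (1 + a * t)
      = (t - s) * (a * (s + t) + 1 - a * K) := by
    ring
  rw [← sub_pos, hdiff]
  exact mul_pos (sub_pos.2 hst) (by linarith)

section Nullclines

variable (r K q₁ a₁ c₁ μ₁ m₁ : ℝ)

noncomputable def preyNullcline (x : ℝ) : ℝ := r * (1 - x / K) * (1 + a₁ * x) / q₁

noncomputable def consumerNullcline (x : ℝ) : ℝ := (c₁ * q₁ * x / (1 + a₁ * x) - μ₁) / m₁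

variable {r K q₁ a₁ c₁ μ₁ m₁}

theorem preyEquation_iff {x y : ℝ} (hq₁ : q₁ ≠ 0) (hx : 1 + a₁ * x ≠ 0) :
    r * (1 - x / K) - q₁ * y / (1 + a₁ * x) = 0 ↔ y = preyNullcline r K q₁ a₁ x := by
  rw [preyNullcline, sub_eq_zero, eq_div_iff hq₁, eq_div_iff hx]
  constructor <;> intro h <;> linarith

theorem consumerEquation_iff {x y : ℝ} (hm₁ : m₁ ≠ 0) :
    c₁ * q₁ * x / (1 + a₁ * x) - μ₁ - m₁ * y = 0 ↔ y = consumerNullcline q₁ a₁ c₁ μ₁ m₁ x := by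
  rw [consumerNullcline, eq_div_iff hm₁]
  constructor <;> intro h <;> linarith

theorem preyNullcline_self (hK : K ≠ 0) : preyNullcline r K q₁ a₁ K = 0 := by
  simp [preyNullcline, div_self hK]

theorem preyNullcline_pos {x : ℝ} (hr : 0 < r) (hq₁ : 0 < q₁) (ha₁ : 0 ≤ a₁) (hx : 0 ≤ x)
    (hxK : x < K) : 0 < preyNullcline r K q₁ a₁ x := by
  have : 0 < 1 - x / K := by
    rw [sub_pos, div_lt_one (hx.trans_lt hxK)]
    exact hxK
  unfold preyNullcline
  positivity

theorem continuous_preyNullcline : Continuous (preyNullcline r K q₁ a₁) := by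
  unfold preyNullcline
  fun_prop

theorem continuousOn_consumerNullcline (ha₁ : 0 ≤ a₁) :
    ContinuousOn (consumerNullcline q₁ a₁ c₁ μ₁ m₁) (Ici 0) := by
  have h : ∀ x ∈ Ici (0 : ℝ), 1 + a₁ * x ≠ 0 := fun x hx => by
    have := mem_Ici.1 hx
    positivity
  unfold consumerNullcline
  fun_prop (disch := exact h _ ‹_›)

theorem strictAntiOn_preyNullcline (hr : 0 < r) (hK : 0 < K) (hq₁ : 0 < q₁) (ha₁ : 0 < a₁) :
    StrictAntiOn (preyNullcline r K q₁ a₁) (Ici ((K - 1 / a₁) / 2)) := by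
  intro s hs t ht hst
  have h := strictAntiOn_sub_mul_one_add_mul ha₁ hs ht hst
  simp only at h
  have hc : 0 < r / (K * q₁) := by positivity
  have key : ∀ x, preyNullcline r K q₁ a₁ x = r / (K * q₁) * ((K - x) * (1 + a₁ * x)) := by
    intro x
    rw [preyNullcline]
    field_simp
  rw [key, key]
  exact mul_lt_mul_of_pos_left h hc

theorem strictMonoOn_consumerNullcline (hq₁ : 0 < q₁) (ha₁ : 0 ≤ a₁) (hc₁ : 0 < c₁)
    (hm₁ : 0 < m₁) : StrictMonoOn (consumerNullcline q₁ a₁ c₁ μ₁ m₁) (Ici 0) := by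
  intro s hs t ht hst
  have h := strictMonoOn_mul_div_one_add_mul (mul_pos hc₁ hq₁) ha₁ hs ht hst
  simp only at h
  exact div_lt_div_of_pos_right (by linarith) hm₁

theorem consumerNullcline_eq_zero {yb : ℝ} (ha₁ : 0 ≤ a₁) (hden₁ : 0 < c₁ * q₁ - a₁ * μ₁)
    (hyb : yb = μ₁ / (c₁ * q₁ - a₁ * μ₁)) (h0 : 0 ≤ yb) :
    consumerNullcline q₁ a₁ c₁ μ₁ m₁ yb = 0 := by
  have hybc : yb * (c₁ * q₁ - a₁ * μ₁) = μ₁ := by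
    rw [hyb, div_mul_cancel₀ _ hden₁.ne']
  have hd : 1 + a₁ * yb ≠ 0 := by positivity
  rw [consumerNullcline, sub_eq_zero.2 ((div_eq_iff hd).2 ?_), zero_div]
  linear_combination hybc

theorem consumerNullcline_pos_iff {yb x : ℝ} (hq₁ : 0 < q₁) (ha₁ : 0 ≤ a₁) (hc₁ : 0 < c₁)
    (hm₁ : 0 < m₁) (hyb : consumerNullcline q₁ a₁ c₁ μ₁ m₁ yb = 0) (h0 : 0 ≤ yb) (hx : 0 ≤ x) :
    0 < consumerNullcline q₁ a₁ c₁ μ₁ m₁ x ↔ yb < x :=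
  hyb ▸ (strictMonoOn_consumerNullcline hq₁ ha₁ hc₁ hm₁).lt_iff_lt h0 hx

theorem boundaryEquilibrium_iff {x y : ℝ} (hq₁ : q₁ ≠ 0) (hm₁ : m₁ ≠ 0) (hx : 1 + a₁ * x ≠ 0) :
    (r * (1 - x / K) - q₁ * y / (1 + a₁ * x) = 0 ∧
        c₁ * q₁ * x / (1 + a₁ * x) - μ₁ - m₁ * y = 0) ↔
      y = consumerNullcline q₁ a₁ c₁ μ₁ m₁ x ∧
        preyNullcline r K q₁ a₁ x = consumerNullcline q₁ a₁ c₁ μ₁ m₁ x := by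
  rw [preyEquation_iff hq₁ hx, consumerEquation_iff hm₁]
  constructor
  · rintro ⟨hP, hC⟩
    exact ⟨hC, hP.symm.trans hC⟩
  · rintro ⟨hC, hPC⟩
    exact ⟨hC.trans hPC.symm, hC⟩

theorem exists_mem_Ioo_preyNullcline_eq_consumerNullcline {yb : ℝ} (hr : 0 < r) (hK : 0 < K)
    (hq₁ : 0 < q₁) (ha₁ : 0 ≤ a₁) (hc₁ : 0 < c₁) (hm₁ : 0 < m₁)
    (hyb : consumerNullcline q₁ a₁ c₁ μ₁ m₁ yb = 0) (h0 : 0 ≤ yb) (h1 : yb < K) :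
    ∃ x ∈ Ioo yb K, preyNullcline r K q₁ a₁ x = consumerNullcline q₁ a₁ c₁ μ₁ m₁ x := by
  have hcont : ContinuousOn
      (fun x => preyNullcline r K q₁ a₁ x - consumerNullcline q₁ a₁ c₁ μ₁ m₁ x) (Icc yb K) :=
    continuous_preyNullcline.continuousOn.sub
      ((continuousOn_consumerNullcline ha₁).mono fun x hx => mem_Ici.2 (h0.trans hx.1))
  have hPCK : preyNullcline r K q₁ a₁ K - consumerNullcline q₁ a₁ c₁ μ₁ m₁ K < 0 := by
    simpa [preyNullcline_self hK.ne'] using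
      (consumerNullcline_pos_iff hq₁ ha₁ hc₁ hm₁ hyb h0 hK.le).2 h1
  have hPCyb : 0 < preyNullcline r K q₁ a₁ yb - consumerNullcline q₁ a₁ c₁ μ₁ m₁ yb := by
    simpa [hyb] using preyNullcline_pos hr hq₁ ha₁ h0 h1
  obtain ⟨x, hx, hPC⟩ := intermediate_value_Ioo' h1.le hcont ⟨hPCK, hPCyb⟩
  exact ⟨x, hx, sub_eq_zero.1 hPC⟩

end Nullclines

theorem statement6_general
    (r K q₁ a₁ c₁ μ₁ m₁ : ℝ)
    (hr : 0 < r) (hK : 0 < K) (hq₁ : 0 < q₁)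
    (ha₁ : 0 < a₁) (hc₁ : 0 < c₁)
    (hm₁ : 0 < m₁)
    (hden₁ : 0 < c₁ * q₁ - a₁ * μ₁)
    (yb : ℝ) (hyb : yb = μ₁ / (c₁ * q₁ - a₁ * μ₁))
    (h0 : 0 < yb) (h1 : yb < K) :
    (∃ x₁ > (0:ℝ), ∃ y₁ > (0:ℝ),
      r * (1 - x₁ / K) - q₁ * y₁ / (1 + a₁ * x₁) = 0 ∧
      c₁ * q₁ * x₁ / (1 + a₁ * x₁) - μ₁ - m₁ * y₁ = 0) ∧
    ((K - 1 / a₁) / 2 ≤ yb →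
      ∃! p : ℝ × ℝ, 0 < p.1 ∧ 0 < p.2 ∧
        r * (1 - p.1 / K) - q₁ * p.2 / (1 + a₁ * p.1) = 0 ∧
        c₁ * q₁ * p.1 / (1 + a₁ * p.1) - μ₁ - m₁ * p.2 = 0) := by
  have hCyb := consumerNullcline_eq_zero (m₁ := m₁) ha₁.le hden₁ hyb h0.le
  have hCpos := fun x (hx : 0 < x) => consumerNullcline_pos_iff hq₁ ha₁.le hc₁ hm₁ hCyb h0.le hx.le
  have hE := fun x y (hx : 0 < x) => boundaryEquilibrium_iff (r := r) (K := K) (c₁ := c₁)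
    (μ₁ := μ₁) (y := y) hq₁.ne' hm₁.ne' (by positivity : 1 + a₁ * x ≠ 0)
  obtain ⟨x₁, ⟨hybx₁, -⟩, hPCx₁⟩ :=
    exists_mem_Ioo_preyNullcline_eq_consumerNullcline hr hK hq₁ ha₁.le hc₁ hm₁ hCyb h0.le h1
  have hx₁ : 0 < x₁ := h0.trans hybx₁
  set y₁ := consumerNullcline q₁ a₁ c₁ μ₁ m₁ x₁
  have hy₁ : 0 < y₁ := (hCpos x₁ hx₁).2 hybx₁
  have hE₁ := (hE x₁ y₁ hx₁).2 ⟨rfl, hPCx₁⟩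
  refine ⟨⟨x₁, hx₁, y₁, hy₁, hE₁⟩, fun hvertex => ⟨(x₁, y₁), ⟨hx₁, hy₁, hE₁⟩, ?_⟩⟩
  rintro ⟨x, y⟩ ⟨hx, hy, hExy⟩
  obtain ⟨rfl, hPC⟩ := (hE x y hx).1 hExy
  have hxx₁ : x = x₁ := eq_of_strictAntiOn_of_strictMonoOn
    ((strictAntiOn_preyNullcline hr hK hq₁ ha₁).mono (Ici_subset_Ici.2 hvertex))
    ((strictMonoOn_consumerNullcline hq₁ ha₁.le hc₁ hm₁).mono (Ici_subset_Ici.2 h0.le))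
    ((hCpos x hx).1 hy).le hybx₁.le hPC hPCx₁
  rw [hxx₁]

/-- Proposition 3.3 (for the consumer `y`): existence, and conditional
uniqueness, of boundary equilibria `E₁ = (x₁, y₁, 0)` of system (3.1). -/
theorem statement6
    (r K q₁ q₂ a₁ a₂ c₁ c₂ μ₁ μ₂ m₁ m₂ : ℝ)
    (hr : 0 < r) (hK : 0 < K) (hq₁ : 0 < q₁) (hq₂ : 0 < q₂)
    (ha₁ : 0 < a₁) (ha₂ : 0 < a₂) (hc₁ : 0 < c₁) (hc₂ : 0 < c₂)
    (hμ₁ : 0 < μ₁) (hμ₂ : 0 < μ₂) (hm₁ : 0 < m₁) (hm₂ : 0 < m₂)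
    (hden₁ : 0 < c₁ * q₁ - a₁ * μ₁)
    (yb : ℝ) (hyb : yb = μ₁ / (c₁ * q₁ - a₁ * μ₁))
    (h0 : 0 < yb) (h1 : yb < K) :
    (∃ x₁ > (0:ℝ), ∃ y₁ > (0:ℝ),
      r * (1 - x₁ / K) - q₁ * y₁ / (1 + a₁ * x₁) = 0 ∧
      c₁ * q₁ * x₁ / (1 + a₁ * x₁) - μ₁ - m₁ * y₁ = 0) ∧
    ((K - 1 / a₁) / 2 ≤ yb →
      ∃! p : ℝ × ℝ, 0 < p.1 ∧ 0 < p.2 ∧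
        r * (1 - p.1 / K) - q₁ * p.2 / (1 + a₁ * p.1) = 0 ∧
        c₁ * q₁ * p.1 / (1 + a₁ * p.1) - μ₁ - m₁ * p.2 = 0) :=
  statement6_general r K q₁ a₁ c₁ μ₁ m₁ hr hK hq₁ ha₁ hc₁ hm₁ hden₁ yb hyb h0 h1
end

section
/- Consider system (3.1) with all parameters positive, c₁q₁ − a₁μ₁ > 0, c₂q₂ − a₂μ₂ > 0, and thresholds y^b = μ₁/(c₁q₁ − a₁μ₁), z^b = μ₂/(c₂q₂ − a₂μ₂) satisfying 0 < y^b < z^b < K. Then every equilibrium of the form E₂ = (x₂, 0, z₂) with x₂ > 0 and z₂ > 0 (i.e., r(1 − x₂/K) − q₂z₂/(1 + a₂x₂) = 0 and c₂q₂x₂/(1 + a₂x₂) − μ₂ − m₂z₂ = 0) satisfies c₁q₁x₂/(1 + a₁x₂) − μ₁ > 0; consequently the Jacobian matrix of the vector field at E₂ has a positive real eigenvalue, so E₂ is asymptotically unstable. -/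
/-- Proposition 3.4: if `0 < y^b < z^b < K`, every boundary equilibrium of the
form `E₂ = (x₂, 0, z₂)` of system (3.1) has `c₁q₁x₂/(1+a₁x₂) − μ₁ > 0`, which
is a positive real eigenvalue of the Jacobian at `E₂`, so `E₂` is unstable. -/
theorem statement7
    (r K q₁ q₂ a₁ a₂ c₁ c₂ μ₁ μ₂ m₁ m₂ : ℝ)
    (hr : 0 < r) (hK : 0 < K) (hq₁ : 0 < q₁) (hq₂ : 0 < q₂)
    (ha₁ : 0 < a₁) (ha₂ : 0 < a₂) (hc₁ : 0 < c₁) (hc₂ : 0 < c₂)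
    (hμ₁ : 0 < μ₁) (hμ₂ : 0 < μ₂) (hm₁ : 0 < m₁) (hm₂ : 0 < m₂)
    (hden₁ : 0 < c₁ * q₁ - a₁ * μ₁) (hden₂ : 0 < c₂ * q₂ - a₂ * μ₂)
    (yb zb : ℝ)
    (hyb : yb = μ₁ / (c₁ * q₁ - a₁ * μ₁))
    (hzb : zb = μ₂ / (c₂ * q₂ - a₂ * μ₂))
    (h0 : 0 < yb) (h1 : yb < zb) (h2 : zb < K)
    (x₂ z₂ : ℝ) (hx₂ : 0 < x₂) (hz₂ : 0 < z₂)
    (heq1 : r * (1 - x₂ / K) - q₂ * z₂ / (1 + a₂ * x₂) = 0)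
    (heq2 : c₂ * q₂ * x₂ / (1 + a₂ * x₂) - μ₂ - m₂ * z₂ = 0) :
    0 < c₁ * q₁ * x₂ / (1 + a₁ * x₂) - μ₁ ∧
    (c₁ * q₁ * x₂ / (1 + a₁ * x₂) - μ₁) ∈ spectrum ℝ
      (!![r * (1 - 2 * x₂ / K) - q₂ * z₂ / (1 + a₂ * x₂) ^ 2,
            -(q₁ * x₂ / (1 + a₁ * x₂)), -(q₂ * x₂ / (1 + a₂ * x₂));
          0, c₁ * q₁ * x₂ / (1 + a₁ * x₂) - μ₁, 0;
          c₂ * q₂ * z₂ / (1 + a₂ * x₂) ^ 2, 0,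
            c₂ * q₂ * x₂ / (1 + a₂ * x₂) - μ₂ - 2 * m₂ * z₂] :
        Matrix (Fin 3) (Fin 3) ℝ) := by
  have hd₁ : 0 < 1 + a₁ * x₂ := by positivity
  have hd₂ : 0 < 1 + a₂ * x₂ := by positivity
  have h2' : c₂ * q₂ * x₂ = (μ₂ + m₂ * z₂) * (1 + a₂ * x₂) := by
    field_simp at heq2; linarith
  have hx_gt : zb < x₂ := by
    rw [hzb, div_lt_iff₀ hden₂]
    nlinarith [mul_pos (mul_pos hm₂ hz₂) hd₂]
  have hxyb : yb < x₂ := lt_trans h1 hx_gt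
  have hμ₁x : μ₁ < x₂ * (c₁ * q₁ - a₁ * μ₁) := by
    rw [hyb] at hxyb
    exact (div_lt_iff₀ hden₁).mp hxyb
  have key : 0 < c₁ * q₁ * x₂ / (1 + a₁ * x₂) - μ₁ := by
    rw [sub_pos, lt_div_iff₀ hd₁]
    nlinarith
  refine ⟨key, ?_⟩
  rw [spectrum.mem_iff]
  intro h
  rw [Matrix.isUnit_iff_isUnit_det] at h
  have hdet : (algebraMap ℝ (Matrix (Fin 3) (Fin 3) ℝ)
      (c₁ * q₁ * x₂ / (1 + a₁ * x₂) - μ₁) -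
      (!![r * (1 - 2 * x₂ / K) - q₂ * z₂ / (1 + a₂ * x₂) ^ 2,
            -(q₁ * x₂ / (1 + a₁ * x₂)), -(q₂ * x₂ / (1 + a₂ * x₂));
          0, c₁ * q₁ * x₂ / (1 + a₁ * x₂) - μ₁, 0;
          c₂ * q₂ * z₂ / (1 + a₂ * x₂) ^ 2, 0,
            c₂ * q₂ * x₂ / (1 + a₂ * x₂) - μ₂ - 2 * m₂ * z₂] :
        Matrix (Fin 3) (Fin 3) ℝ)).det = 0 := by
    apply Matrix.det_eq_zero_of_row_eq_zero 1
    intro j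
    fin_cases j <;>
      simp [Matrix.algebraMap_matrix_apply, Matrix.sub_apply]
  rw [hdet] at h
  exact h.ne_zero rfl
end

section
/- Consider system (3.1) with all parameters positive, c₁q₁ − a₁μ₁ > 0, c₂q₂ − a₂μ₂ > 0, and thresholds y^b = μ₁/(c₁q₁ − a₁μ₁), z^b = μ₂/(c₂q₂ − a₂μ₂) satisfying (K − 1/a₁)/2 < y^b < z^b < K. Let (x₁, y₁) be the unique pair of positive reals with r(1 − x₁/K) − q₁y₁/(1 + a₁x₁) = 0 and c₁q₁x₁/(1 + a₁x₁) − μ₁ − m₁y₁ = 0, and suppose the boundary equilibrium E₁ = (x₁, y₁, 0) is asymptotically stable, so that in particular c₂q₂x₁/(1 + a₂x₁) − μ₂ < 0. Then system (3.1) has no positive equilibrium, i.e., no point (x*, y*, z*) with all coordinates positive at which the right-hand side of (3.1) vanishes. -/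
set_option maxHeartbeats 1000000


/-- Corollary 3.8: if `(K − 1/a₁)/2 < y^b < z^b < K` and the boundary
equilibrium `E₁ = (x₁, y₁, 0)` is asymptotically stable (in particular
`c₂q₂x₁/(1+a₂x₁) − μ₂ < 0`), then system (3.1) has no positive equilibrium. -/
theorem statement9
    (r K q₁ q₂ a₁ a₂ c₁ c₂ μ₁ μ₂ m₁ m₂ : ℝ)
    (hr : 0 < r) (hK : 0 < K) (hq₁ : 0 < q₁) (hq₂ : 0 < q₂)
    (ha₁ : 0 < a₁) (ha₂ : 0 < a₂) (hc₁ : 0 < c₁) (hc₂ : 0 < c₂)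
    (hμ₁ : 0 < μ₁) (hμ₂ : 0 < μ₂) (hm₁ : 0 < m₁) (hm₂ : 0 < m₂)
    (hden₁ : 0 < c₁ * q₁ - a₁ * μ₁) (hden₂ : 0 < c₂ * q₂ - a₂ * μ₂)
    (yb zb : ℝ)
    (hyb : yb = μ₁ / (c₁ * q₁ - a₁ * μ₁))
    (hzb : zb = μ₂ / (c₂ * q₂ - a₂ * μ₂))
    (h0 : (K - 1 / a₁) / 2 < yb) (h1 : yb < zb) (h2 : zb < K)
    -- the unique boundary equilibrium E₁ = (x₁, y₁, 0)
    (x₁ y₁ : ℝ) (hx₁ : 0 < x₁) (hy₁ : 0 < y₁)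
    (heq1 : r * (1 - x₁ / K) - q₁ * y₁ / (1 + a₁ * x₁) = 0)
    (heq2 : c₁ * q₁ * x₁ / (1 + a₁ * x₁) - μ₁ - m₁ * y₁ = 0)
    (huniq : ∀ x y : ℝ, 0 < x → 0 < y →
      r * (1 - x / K) - q₁ * y / (1 + a₁ * x) = 0 →
      c₁ * q₁ * x / (1 + a₁ * x) - μ₁ - m₁ * y = 0 → x = x₁ ∧ y = y₁)
    -- asymptotic stability of E₁ (the eigenvalue condition)
    (hstab : c₂ * q₂ * x₁ / (1 + a₂ * x₁) - μ₂ < 0) :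
    ¬ ∃ x y z : ℝ, 0 < x ∧ 0 < y ∧ 0 < z ∧
      r * (1 - x / K) - q₁ * y / (1 + a₁ * x) - q₂ * z / (1 + a₂ * x) = 0 ∧
      c₁ * q₁ * x / (1 + a₁ * x) - μ₁ - m₁ * y = 0 ∧
      c₂ * q₂ * x / (1 + a₂ * x) - μ₂ - m₂ * z = 0 := by
  rintro ⟨x, y, z, hx, hy, hz, e1, e2, e3⟩
  have hd2x : (0:ℝ) < 1 + a₂ * x := by positivity
  have hd2x₁ : (0:ℝ) < 1 + a₂ * x₁ := by positivity
  have hd1x : (0:ℝ) < 1 + a₁ * x := by positivity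
  -- x₁ < zb from stability
  have hx₁zb : x₁ < zb := by
    rw [hzb, lt_div_iff₀ hden₂]
    have h := hstab
    rw [sub_neg, div_lt_iff₀ hd2x₁] at h
    nlinarith
  -- zb < x from the z-equation
  have hzbx : zb < x := by
    rw [hzb, div_lt_iff₀ hden₂]
    have h : c₂ * q₂ * x / (1 + a₂ * x) = μ₂ + m₂ * z := by linarith
    rw [div_eq_iff (ne_of_gt hd2x)] at h
    nlinarith [mul_pos hm₂ hz, mul_pos (mul_pos hm₂ hz) (mul_pos ha₂ hx)]
  -- yb < K
  have hybK : yb < K := lt_trans h1 h2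
  -- x < K
  have hxK : x < K := by
    have hq1y : 0 < q₁ * y / (1 + a₁ * x) := by positivity
    have hq2z : 0 < q₂ * z / (1 + a₂ * x) := by positivity
    have h : 0 < r * (1 - x / K) := by linarith
    have h' : 0 < 1 - x / K := by
      by_contra hc
      push_neg at hc
      have := mul_nonpos_of_nonneg_of_nonpos hr.le hc
      linarith
    have := (div_lt_one hK).mp (by linarith)
    linarith
  -- the boundary nullcline function
  set F : ℝ → ℝ := fun t =>
    r * (1 - t / K) - q₁ * ((c₁ * q₁ * t / (1 + a₁ * t) - μ₁) / m₁) / (1 + a₁ * t) with hF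
  have hFcont : ContinuousOn F (Set.Icc x K) := by
    have hne : ∀ t ∈ Set.Icc x K, (1 + a₁ * t) ≠ 0 := by
      intro t ht
      have : 0 < t := lt_of_lt_of_le hx ht.1
      positivity
    have hd : ContinuousOn (fun t : ℝ => 1 + a₁ * t) (Set.Icc x K) := by fun_prop
    have hA : ContinuousOn (fun t : ℝ => c₁ * q₁ * t / (1 + a₁ * t) - μ₁) (Set.Icc x K) :=
      ((continuousOn_const.mul continuousOn_id).div hd hne).sub continuousOn_const
    exact ContinuousOn.sub (by fun_prop)
      ((continuousOn_const.mul (hA.div continuousOn_const fun t _ => hm₁.ne')).div hd hne)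
  -- F x > 0
  have hyval : y = (c₁ * q₁ * x / (1 + a₁ * x) - μ₁) / m₁ := by
    rw [eq_div_iff hm₁.ne']
    linarith
  have hFx : 0 < F x := by
    have : F x = q₂ * z / (1 + a₂ * x) := by
      simp only [hF]
      rw [← hyval]
      linarith
    rw [this]; positivity
  -- F K < 0
  have hd1K : (0:ℝ) < 1 + a₁ * K := by positivity
  have hyK : 0 < (c₁ * q₁ * K / (1 + a₁ * K) - μ₁) / m₁ := by
    apply div_pos _ hm₁
    rw [sub_pos, lt_div_iff₀ hd1K]
    have : yb < K := hybK
    rw [hyb, div_lt_iff₀ hden₁] at this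
    nlinarith
  have hFK : F K < 0 := by
    have : F K = - (q₁ * ((c₁ * q₁ * K / (1 + a₁ * K) - μ₁) / m₁) / (1 + a₁ * K)) := by
      simp only [hF]
      rw [div_self (ne_of_gt hK)]
      ring
    rw [this]
    have : 0 < q₁ * ((c₁ * q₁ * K / (1 + a₁ * K) - μ₁) / m₁) / (1 + a₁ * K) := by positivity
    linarith
  -- IVT: there is x' in [x, K] with F x' = 0
  have hmem : (0:ℝ) ∈ Set.Icc (F K) (F x) := ⟨le_of_lt hFK, le_of_lt hFx⟩
  obtain ⟨x', hx'mem, hFx'⟩ := intermediate_value_Icc' (le_of_lt hxK) hFcont hmem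
  have hx'pos : 0 < x' := lt_of_lt_of_le hx hx'mem.1
  have hd1x' : (0:ℝ) < 1 + a₁ * x' := by positivity
  set y' := (c₁ * q₁ * x' / (1 + a₁ * x') - μ₁) / m₁ with hy'
  have hy'pos : 0 < y' := by
    apply div_pos _ hm₁
    rw [sub_pos, lt_div_iff₀ hd1x']
    have hx'yb : yb < x' := lt_of_lt_of_le (lt_trans h1 hzbx) hx'mem.1
    rw [hyb, div_lt_iff₀ hden₁] at hx'yb
    nlinarith
  have he1' : r * (1 - x' / K) - q₁ * y' / (1 + a₁ * x') = 0 := hFx'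
  have he2' : c₁ * q₁ * x' / (1 + a₁ * x') - μ₁ - m₁ * y' = 0 := by
    rw [hy']
    field_simp
    ring
  obtain ⟨hxx₁, -⟩ := huniq x' y' hx'pos hy'pos he1' he2'
  have : x₁ < x' := lt_of_lt_of_le (lt_trans hx₁zb hzbx) hx'mem.1
  linarith [hxx₁ ▸ this]
end

section
/- Consider system (3.1) with all parameters positive, c₁q₁ − a₁μ₁ > 0, c₂q₂ − a₂μ₂ > 0, and thresholds y^b = μ₁/(c₁q₁ − a₁μ₁), z^b = μ₂/(c₂q₂ − a₂μ₂) both lying in the open interval (K/2, K). If system (3.1) has a positive equilibrium E* = (x*, y*, z*), then E* is the unique positive equilibrium, and every eigenvalue of the Jacobian matrix of the vector field of (3.1) at E* has negative real part; in particular E* is a local attractor. -/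
/-!
At an equilibrium the predators sit on their nullclines, and the prey equation becomes
`r (1 - x/K) = P₁ x + P₂ x`, where `Pᵢ` is the predation pressure of predator `i` expressed through
`x` alone. `P₁` is increasing on `[0, 2 y^b]` and `P₂` on `[0, 2 z^b]`, both of which contain
`[0, K]`, while the logistic side is decreasing; since a positive equilibrium has `x < K`, its prey
coordinate is unique, and it determines the predator coordinates.

At `E*` the Jacobian has the sign pattern `[[-, -, -], [+, -, 0], [+, 0, -]]`: its `(1,1)` entry is
below `r (1 - 2x*/K) < 0` because `x* > y^b > K/2`. For such a matrix the characteristic polynomial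
`λ³ + aλ² + bλ + c` has `a, b, c > 0` and `c < ab`, so all its roots lie in the open left
half-plane by the Routh–Hurwitz criterion.
-/

/-- The predation term `q y / (1 + a x)` of the prey equation, with `y` on the predator nullcline
`m y (1 + a x) = (c q - a μ) x - μ`. -/
noncomputable def predation (q a c μ m x : ℝ) : ℝ :=
  q * ((c * q - a * μ) * x - μ) / (m * (1 + a * x) ^ 2)

theorem predator_nullcline {q a c μ m x y : ℝ} (hx : 1 + a * x ≠ 0)
    (h : c * q * x / (1 + a * x) - μ - m * y = 0) :
    m * y * (1 + a * x) = (c * q - a * μ) * x - μ := by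
  have := (div_eq_iff hx).1 (by linarith : c * q * x / (1 + a * x) = μ + m * y)
  linear_combination -this

theorem predation_eq_of_predator_eq {q a c μ m x y : ℝ} (hx : 1 + a * x ≠ 0) (hm : m ≠ 0)
    (h : c * q * x / (1 + a * x) - μ - m * y = 0) :
    q * y / (1 + a * x) = predation q a c μ m x := by
  rw [predation, div_eq_div_iff hx (by positivity)]
  linear_combination q * (1 + a * x) * predator_nullcline hx h

theorem div_lt_of_predator_eq {q a c μ m x y : ℝ} (hm : 0 < m) (hα : 0 < c * q - a * μ)
    (hx : 0 < 1 + a * x) (hy : 0 < y) (h : c * q * x / (1 + a * x) - μ - m * y = 0) :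
    μ / (c * q - a * μ) < x := by
  rw [div_lt_iff₀ hα]
  nlinarith [predator_nullcline hx.ne' h, mul_pos (mul_pos hm hy) hx]

theorem predation_strictMonoOn {q a c μ m : ℝ} (hq : 0 < q) (ha : 0 ≤ a) (hm : 0 < m)
    (hα : 0 < c * q - a * μ) :
    StrictMonoOn (predation q a c μ m) (Set.Icc 0 (2 * (μ / (c * q - a * μ)))) := by
  rintro x₁ ⟨hx₁, -⟩ x₂ ⟨-, hx₂⟩ hlt
  have hd₁ : 0 < 1 + a * x₁ := by positivity
  have hd₂ : 0 < 1 + a * x₂ := by nlinarith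
  rw [predation, predation, div_lt_div_iff₀ (by positivity) (by positivity)]
  set α := c * q - a * μ
  set yb := μ / α
  have hμ : μ = yb * α := (div_mul_cancel₀ μ hα.ne').symm
  have hcross : (α * x₂ - μ) * (1 + a * x₁) ^ 2 - (α * x₁ - μ) * (1 + a * x₂) ^ 2
      = (x₂ - x₁) * α * (1 + 2 * a * yb + a ^ 2 * (x₁ * (2 * yb - x₂) + yb * (x₂ - x₁))) := by
    rw [hμ]; ring
  have hfactor : 0 < 1 + 2 * a * yb + a ^ 2 * (x₁ * (2 * yb - x₂) + yb * (x₂ - x₁)) := by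
    have : 0 ≤ yb := by linarith
    have : 0 ≤ 2 * yb - x₂ := by linarith
    have : 0 ≤ x₂ - x₁ := by linarith
    positivity
  have : 0 < q * m * ((α * x₂ - μ) * (1 + a * x₁) ^ 2 - (α * x₁ - μ) * (1 + a * x₂) ^ 2) := by
    have := sub_pos.2 hlt
    rw [hcross]
    positivity
  linarith

theorem prey_balance_strictAntiOn {r K : ℝ} {P₁ P₂ : ℝ → ℝ} {s : Set ℝ} (hr : 0 < r) (hK : 0 < K)
    (h₁ : MonotoneOn P₁ s) (h₂ : MonotoneOn P₂ s) :
    StrictAntiOn (fun x => r * (1 - x / K) - P₁ x - P₂ x) s := by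
  intro x hx x' hx' hlt
  have : r * (1 - x' / K) < r * (1 - x / K) := by gcongr
  linarith [h₁ hx hx' hlt.le, h₂ hx hx' hlt.le]

theorem prey_balance_of_equilibrium {r K q₁ q₂ a₁ a₂ c₁ c₂ μ₁ μ₂ m₁ m₂ x y z : ℝ}
    (hr : 0 < r) (hK : 0 < K) (hq₁ : 0 < q₁) (hq₂ : 0 < q₂) (ha₁ : 0 ≤ a₁) (ha₂ : 0 ≤ a₂)
    (hm₁ : 0 < m₁) (hm₂ : 0 < m₂) (hx : 0 < x) (hy : 0 < y) (hz : 0 < z)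
    (e₁ : r * (1 - x / K) - q₁ * y / (1 + a₁ * x) - q₂ * z / (1 + a₂ * x) = 0)
    (e₂ : c₁ * q₁ * x / (1 + a₁ * x) - μ₁ - m₁ * y = 0)
    (e₃ : c₂ * q₂ * x / (1 + a₂ * x) - μ₂ - m₂ * z = 0) :
    x < K ∧ r * (1 - x / K) - predation q₁ a₁ c₁ μ₁ m₁ x - predation q₂ a₂ c₂ μ₂ m₂ x = 0 := by
  have hd₁ : 0 < 1 + a₁ * x := by positivity
  have hd₂ : 0 < 1 + a₂ * x := by positivity
  refine ⟨?_, ?_⟩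
  · have : 0 < r * (1 - x / K) := by
      linarith [show 0 < q₁ * y / (1 + a₁ * x) by positivity,
        show 0 < q₂ * z / (1 + a₂ * x) by positivity]
    have : x / K < 1 := by nlinarith
    rwa [div_lt_one hK] at this
  · rwa [← predation_eq_of_predator_eq hd₁.ne' hm₁.ne' e₂,
      ← predation_eq_of_predator_eq hd₂.ne' hm₂.ne' e₃]

theorem re_neg_of_cubic_eq_zero {a b c : ℝ} (ha : 0 < a) (hb : 0 < b) (hc : 0 < c)
    (habc : c < a * b) {z : ℂ} (hz : z ^ 3 + a * z ^ 2 + b * z + c = 0) : z.re < 0 := by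
  have hre := congrArg Complex.re hz
  have him := congrArg Complex.im hz
  simp only [Complex.add_re, Complex.add_im, Complex.mul_re, Complex.mul_im,
    Complex.ofReal_re, Complex.ofReal_im, Complex.zero_re, Complex.zero_im,
    pow_succ, pow_zero, one_mul] at hre him
  by_contra! hge
  rcases eq_or_ne z.im 0 with h0 | h0
  · rw [h0] at hre
    nlinarith [mul_nonneg (mul_nonneg hge hge) hge, mul_nonneg hge hge]
  · have hv2 : z.im ^ 2 = 3 * z.re ^ 2 + 2 * a * z.re + b := by
      have : z.im * (3 * z.re ^ 2 + 2 * a * z.re + b - z.im ^ 2) = 0 := by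
        linear_combination him
      linarith [(mul_eq_zero.mp this).resolve_left h0]
    nlinarith [mul_nonneg (mul_nonneg hge hge) hge, mul_nonneg hge hge,
      mul_nonneg (mul_nonneg hge hge) ha.le, mul_nonneg hge hb.le, mul_nonneg hge (sq_nonneg a)]

theorem re_neg_of_mem_spectrum_arrowhead {j₁₁ j₁₂ j₁₃ j₂₁ j₂₂ j₃₁ j₃₃ : ℝ}
    (h₁₁ : j₁₁ < 0) (h₁₂ : j₁₂ < 0) (h₁₃ : j₁₃ < 0) (h₂₁ : 0 < j₂₁) (h₂₂ : j₂₂ < 0)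
    (h₃₁ : 0 < j₃₁) (h₃₃ : j₃₃ < 0) {lam : ℂ}
    (hlam : lam ∈ spectrum ℂ ((!![j₁₁, j₁₂, j₁₃; j₂₁, j₂₂, 0; j₃₁, 0, j₃₃] :
      Matrix (Fin 3) (Fin 3) ℝ).map (Complex.ofReal ·))) :
    lam.re < 0 := by
  obtain ⟨A, hA, rfl⟩ : ∃ A, 0 < A ∧ j₁₁ = -A := ⟨-j₁₁, by linarith, by ring⟩
  obtain ⟨B, hB, rfl⟩ : ∃ B, 0 < B ∧ j₁₂ = -B := ⟨-j₁₂, by linarith, by ring⟩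
  obtain ⟨C, hC, rfl⟩ : ∃ C, 0 < C ∧ j₁₃ = -C := ⟨-j₁₃, by linarith, by ring⟩
  obtain ⟨E, hE, rfl⟩ : ∃ E, 0 < E ∧ j₂₂ = -E := ⟨-j₂₂, by linarith, by ring⟩
  obtain ⟨G, hG, rfl⟩ : ∃ G, 0 < G ∧ j₃₃ = -G := ⟨-j₃₃, by linarith, by ring⟩
  rw [Matrix.mem_spectrum_iff_isRoot_charpoly, Polynomial.IsRoot, Matrix.eval_charpoly] at hlam
  have hchar : (lam + A) * (lam + E) * (lam + G) + B * j₂₁ * (lam + G)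
      + C * (lam + E) * j₃₁ = 0 := by
    simpa [Matrix.det_fin_three, Matrix.scalar_apply] using hlam
  refine re_neg_of_cubic_eq_zero (a := A + E + G)
    (b := A * E + A * G + E * G + B * j₂₁ + C * j₃₁)
    (c := A * E * G + B * j₂₁ * G + C * j₃₁ * E) (by positivity) (by positivity)
    (by positivity) ?_ ?_
  · have : (A + E + G) * (A * E + A * G + E * G + B * j₂₁ + C * j₃₁)
        - (A * E * G + B * j₂₁ * G + C * j₃₁ * E)
        = (A + E) * (A + G) * (E + G) + (A + E) * B * j₂₁ + (A + G) * C * j₃₁ := by ring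
    have : 0 < (A + E) * (A + G) * (E + G) + (A + E) * B * j₂₁ + (A + G) * C * j₃₁ := by
      positivity
    linarith
  · push_cast
    linear_combination hchar

theorem statement10_general
    (r K q₁ q₂ a₁ a₂ c₁ c₂ μ₁ μ₂ m₁ m₂ : ℝ)
    (hr : 0 < r) (hK : 0 < K) (hq₁ : 0 < q₁) (hq₂ : 0 < q₂)
    (ha₁ : 0 < a₁) (ha₂ : 0 < a₂) (hc₁ : 0 < c₁) (hc₂ : 0 < c₂)
    (hm₁ : 0 < m₁) (hm₂ : 0 < m₂)
    (hden₁ : 0 < c₁ * q₁ - a₁ * μ₁) (hden₂ : 0 < c₂ * q₂ - a₂ * μ₂)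
    (yb zb : ℝ)
    (hyb : yb = μ₁ / (c₁ * q₁ - a₁ * μ₁))
    (hzb : zb = μ₂ / (c₂ * q₂ - a₂ * μ₂))
    (hyb' : yb ∈ Set.Ioo (K / 2) K) (hzb' : zb ∈ Set.Ioo (K / 2) K)
    -- the positive equilibrium E* = (x*, y*, z*)
    (xs ys zs : ℝ) (hxs : 0 < xs) (hys : 0 < ys) (hzs : 0 < zs)
    (heq1 : r * (1 - xs / K) - q₁ * ys / (1 + a₁ * xs)
      - q₂ * zs / (1 + a₂ * xs) = 0)
    (heq2 : c₁ * q₁ * xs / (1 + a₁ * xs) - μ₁ - m₁ * ys = 0)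
    (heq3 : c₂ * q₂ * xs / (1 + a₂ * xs) - μ₂ - m₂ * zs = 0) :
    (∀ x y z : ℝ, 0 < x → 0 < y → 0 < z →
      r * (1 - x / K) - q₁ * y / (1 + a₁ * x) - q₂ * z / (1 + a₂ * x) = 0 →
      c₁ * q₁ * x / (1 + a₁ * x) - μ₁ - m₁ * y = 0 →
      c₂ * q₂ * x / (1 + a₂ * x) - μ₂ - m₂ * z = 0 →
      x = xs ∧ y = ys ∧ z = zs) ∧
    ∀ lam : ℂ, lam ∈ spectrum ℂ
      ((!![r * (1 - 2 * xs / K) - q₁ * ys / (1 + a₁ * xs) ^ 2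
              - q₂ * zs / (1 + a₂ * xs) ^ 2,
            -(q₁ * xs / (1 + a₁ * xs)), -(q₂ * xs / (1 + a₂ * xs));
          c₁ * q₁ * ys / (1 + a₁ * xs) ^ 2,
            c₁ * q₁ * xs / (1 + a₁ * xs) - μ₁ - 2 * m₁ * ys, 0;
          c₂ * q₂ * zs / (1 + a₂ * xs) ^ 2, 0,
            c₂ * q₂ * xs / (1 + a₂ * xs) - μ₂ - 2 * m₂ * zs] :
          Matrix (Fin 3) (Fin 3) ℝ).map (Complex.ofReal ·)) →
      lam.re < 0 := by
  subst hyb hzb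
  obtain ⟨hxsK, hbal⟩ := prey_balance_of_equilibrium hr hK hq₁ hq₂ ha₁.le ha₂.le hm₁ hm₂
    hxs hys hzs heq1 heq2 heq3
  have hanti : StrictAntiOn (fun x => r * (1 - x / K) - predation q₁ a₁ c₁ μ₁ m₁ x
      - predation q₂ a₂ c₂ μ₂ m₂ x) (Set.Icc 0 K) :=
    prey_balance_strictAntiOn hr hK
      ((predation_strictMonoOn hq₁ ha₁.le hm₁ hden₁).monotoneOn.mono
        (Set.Icc_subset_Icc_right (by linarith [hyb'.1])))
      ((predation_strictMonoOn hq₂ ha₂.le hm₂ hden₂).monotoneOn.mono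
        (Set.Icc_subset_Icc_right (by linarith [hzb'.1])))
  refine ⟨fun x y z hx hy hz e₁ e₂ e₃ => ?_,
    fun lam hlam => re_neg_of_mem_spectrum_arrowhead ?_ ?_ ?_ (by positivity) ?_
      (by positivity) ?_ hlam⟩
  · obtain ⟨hxK, hbal'⟩ := prey_balance_of_equilibrium hr hK hq₁ hq₂ ha₁.le ha₂.le hm₁ hm₂
      hx hy hz e₁ e₂ e₃
    obtain rfl : x = xs := hanti.injOn ⟨hx.le, hxK.le⟩ ⟨hxs.le, hxsK.le⟩ (hbal'.trans hbal.symm)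
    exact ⟨rfl, mul_left_cancel₀ hm₁.ne' (by linarith), mul_left_cancel₀ hm₂.ne' (by linarith)⟩
  · have hxs2 : K / 2 < xs :=
      hyb'.1.trans (div_lt_of_predator_eq hm₁ hden₁ (by positivity) hys heq2)
    have : r * (1 - 2 * xs / K) < 0 := by
      have : 1 < 2 * xs / K := by rw [lt_div_iff₀ hK]; linarith
      nlinarith
    linarith [show 0 < q₁ * ys / (1 + a₁ * xs) ^ 2 by positivity,
      show 0 < q₂ * zs / (1 + a₂ * xs) ^ 2 by positivity]
  · exact neg_neg_of_pos (by positivity)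
  · exact neg_neg_of_pos (by positivity)
  · linarith [mul_pos hm₁ hys]
  · linarith [mul_pos hm₂ hzs]

/-- Theorem 3.9: if `y^b, z^b ∈ (K/2, K)` and system (3.1) has a positive
equilibrium `E*`, then `E*` is the unique positive equilibrium and all
eigenvalues of the Jacobian at `E*` have negative real part. -/
theorem statement10
    (r K q₁ q₂ a₁ a₂ c₁ c₂ μ₁ μ₂ m₁ m₂ : ℝ)
    (hr : 0 < r) (hK : 0 < K) (hq₁ : 0 < q₁) (hq₂ : 0 < q₂)
    (ha₁ : 0 < a₁) (ha₂ : 0 < a₂) (hc₁ : 0 < c₁) (hc₂ : 0 < c₂)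
    (hμ₁ : 0 < μ₁) (hμ₂ : 0 < μ₂) (hm₁ : 0 < m₁) (hm₂ : 0 < m₂)
    (hden₁ : 0 < c₁ * q₁ - a₁ * μ₁) (hden₂ : 0 < c₂ * q₂ - a₂ * μ₂)
    (yb zb : ℝ)
    (hyb : yb = μ₁ / (c₁ * q₁ - a₁ * μ₁))
    (hzb : zb = μ₂ / (c₂ * q₂ - a₂ * μ₂))
    (hyb' : yb ∈ Set.Ioo (K / 2) K) (hzb' : zb ∈ Set.Ioo (K / 2) K)
    -- the positive equilibrium E* = (x*, y*, z*)
    (xs ys zs : ℝ) (hxs : 0 < xs) (hys : 0 < ys) (hzs : 0 < zs)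
    (heq1 : r * (1 - xs / K) - q₁ * ys / (1 + a₁ * xs)
      - q₂ * zs / (1 + a₂ * xs) = 0)
    (heq2 : c₁ * q₁ * xs / (1 + a₁ * xs) - μ₁ - m₁ * ys = 0)
    (heq3 : c₂ * q₂ * xs / (1 + a₂ * xs) - μ₂ - m₂ * zs = 0) :
    (∀ x y z : ℝ, 0 < x → 0 < y → 0 < z →
      r * (1 - x / K) - q₁ * y / (1 + a₁ * x) - q₂ * z / (1 + a₂ * x) = 0 →
      c₁ * q₁ * x / (1 + a₁ * x) - μ₁ - m₁ * y = 0 →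
      c₂ * q₂ * x / (1 + a₂ * x) - μ₂ - m₂ * z = 0 →
      x = xs ∧ y = ys ∧ z = zs) ∧
    ∀ lam : ℂ, lam ∈ spectrum ℂ
      ((!![r * (1 - 2 * xs / K) - q₁ * ys / (1 + a₁ * xs) ^ 2
              - q₂ * zs / (1 + a₂ * xs) ^ 2,
            -(q₁ * xs / (1 + a₁ * xs)), -(q₂ * xs / (1 + a₂ * xs));
          c₁ * q₁ * ys / (1 + a₁ * xs) ^ 2,
            c₁ * q₁ * xs / (1 + a₁ * xs) - μ₁ - 2 * m₁ * ys, 0;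
          c₂ * q₂ * zs / (1 + a₂ * xs) ^ 2, 0,
            c₂ * q₂ * xs / (1 + a₂ * xs) - μ₂ - 2 * m₂ * zs] :
          Matrix (Fin 3) (Fin 3) ℝ).map (Complex.ofReal ·)) →
      lam.re < 0 :=
  statement10_general r K q₁ q₂ a₁ a₂ c₁ c₂ μ₁ μ₂ m₁ m₂ hr hK hq₁ hq₂ ha₁ ha₂ hc₁ hc₂ hm₁ hm₂ hden₁
    hden₂ yb zb hyb hzb hyb' hzb' xs ys zs hxs hys hzs heq1 heq2 heq3
end

section
/- Let r₁ > 0, r₂ > r₁/2, K₂ > 3r₂/(2r₂ − r₁), and 0 < c₁ < c̃₁, where c̃₁ = r₂(2K₂ − 3)(4r₁²K₂² + 4r₁r₂K₂(3 − 2K₂) + 5r₂²(1 − 4K₂)²)/(45r₁³K₂³). Define m₀ = [√(r₁⁴K₂⁴(4 − 45c₁)² + 2r₁²r₂²K₂²(45c₁(41 − 88K₂ + 96K₂²) + 32K₂(1 + 8K₂) − 124) + r₂⁴(31 − 8K₂(1 + 8K₂))²) + r₂²(−96K₂² + 88K₂ − 41) + 8r₁r₂K₂(2K₂ − 3) − r₁²K₂²(4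 + 45c₁)] / (80K₂(K₂(r₁ − 2r₂) + 3r₂)), and assume m₀ < 3c₁r₁/16 + r₂(4K₂ − 1)/(16K₂). Then, with m = m₀, the 3×3 real matrix J = [[−r₁/10, 0, −3r₁/16], [0, r₂(2K₂ − 3)/(10K₂), r₂(1 − 4K₂)/(16K₂)], [3c₁r₁/5, r₂(4K₂ − 1)/(5K₂), −m]] has spectrum of the form {ν, iω, −iω} for some real numbers ν and ω. -/
open Polynomial
private lemma charpoly3 (a b c d e f g h i : ℂ) :
    (!![a,b,c;d,e,f;g,h,i] : Matrix (Fin 3) (Fin 3) ℂ).charpoly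
      = X^3 - C (a+e+i) * X^2 + C (a*e+a*i+e*i-b*d-c*g-f*h) * X
        - C (a*e*i+b*f*g+c*d*h-c*e*g-b*d*i-a*f*h) := by
  rw [Matrix.charpoly, Matrix.det_fin_three]
  simp [Matrix.charmatrix_apply_eq, Matrix.charmatrix_apply_ne]
  ring

private lemma aux3 (a b c d e f g h i ν ω : ℝ)
    (h1 : a + e + i = ν)
    (h2 : a*e+a*i+e*i-b*d-c*g-f*h = ω^2)
    (h3 : a*e*i+b*f*g+c*d*h-c*e*g-b*d*i-a*f*h = ν*ω^2) :
    ((!![a,b,c;d,e,f;g,h,i] : Matrix (Fin 3) (Fin 3) ℝ).map (Complex.ofReal ·)).charpoly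
      = (X - C (ν : ℂ)) * (X - C ((ω : ℂ) * Complex.I)) *
        (X - C (-((ω : ℂ) * Complex.I))) := by
  have hmap : (!![a,b,c;d,e,f;g,h,i] : Matrix (Fin 3) (Fin 3) ℝ).map (Complex.ofReal ·)
      = !![(a:ℂ),b,c;d,e,f;g,h,i] := by
    ext i j; fin_cases i <;> fin_cases j <;> simp [Matrix.map_apply]
  rw [hmap, charpoly3]
  have e1 : ((a:ℂ)+e+i) = (ν:ℂ) := by exact_mod_cast congrArg (Complex.ofReal ·) h1
  have e2 : ((a:ℂ)*e+a*i+e*i-b*d-c*g-f*h) = (ω:ℂ)^2 := by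
    exact_mod_cast congrArg (Complex.ofReal ·) h2
  have e3 : ((a:ℂ)*e*i+b*f*g+c*d*h-c*e*g-b*d*i-a*f*h) = (ν:ℂ)*(ω:ℂ)^2 := by
    exact_mod_cast congrArg (Complex.ofReal ·) h3
  rw [e1, e2, e3]
  have hCI : (C (Complex.I))^2 = -1 := by
    rw [← map_pow, Complex.I_sq, map_neg, map_one]
  simp only [map_mul, map_neg, map_pow]
  linear_combination ((X - C (ν:ℂ)) * ((C ((ω:ℝ):ℂ))^2)) * hCI



open Polynomial

set_option maxHeartbeats 2000000 in
/-- Theorem 4.20: at the Hopf threshold `m = m₀` the Jacobian of system (4.15)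
at the positive equilibrium `(1/4, 1/4, 1)` has spectrum `{ν, iω, −iω}`. -/
theorem statement17
    (r₁ r₂ K₂ c₁ m₀ m : ℝ)
    (hr₁ : 0 < r₁) (hr₂ : r₁ / 2 < r₂)
    (hK₂ : 3 * r₂ / (2 * r₂ - r₁) < K₂)
    (hc₁0 : 0 < c₁)
    (hc₁ : c₁ < r₂ * (2 * K₂ - 3) *
      (4 * r₁ ^ 2 * K₂ ^ 2 + 4 * r₁ * r₂ * K₂ * (3 - 2 * K₂)
        + 5 * r₂ ^ 2 * (1 - 4 * K₂) ^ 2) / (45 * r₁ ^ 3 * K₂ ^ 3))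
    (hm₀ : m₀ = (Real.sqrt (r₁ ^ 4 * K₂ ^ 4 * (4 - 45 * c₁) ^ 2
        + 2 * r₁ ^ 2 * r₂ ^ 2 * K₂ ^ 2 *
          (45 * c₁ * (41 - 88 * K₂ + 96 * K₂ ^ 2)
            + 32 * K₂ * (1 + 8 * K₂) - 124)
        + r₂ ^ 4 * (31 - 8 * K₂ * (1 + 8 * K₂)) ^ 2)
      + r₂ ^ 2 * (-96 * K₂ ^ 2 + 88 * K₂ - 41)
      + 8 * r₁ * r₂ * K₂ * (2 * K₂ - 3)
      - r₁ ^ 2 * K₂ ^ 2 * (4 + 45 * c₁)) /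
      (80 * K₂ * (K₂ * (r₁ - 2 * r₂) + 3 * r₂)))
    (hm₀lt : m₀ < 3 * c₁ * r₁ / 16 + r₂ * (4 * K₂ - 1) / (16 * K₂))
    (hmm : m = m₀) :
    ∃ ν ω : ℝ,
      ((!![-(r₁ / 10), 0, -(3 * r₁ / 16);
           0, r₂ * (2 * K₂ - 3) / (10 * K₂), r₂ * (1 - 4 * K₂) / (16 * K₂);
           3 * c₁ * r₁ / 5, r₂ * (4 * K₂ - 1) / (5 * K₂), -m] :
          Matrix (Fin 3) (Fin 3) ℝ).map (Complex.ofReal ·)).charpoly =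
      (X - C (ν : ℂ)) * (X - C ((ω : ℂ) * Complex.I)) *
        (X - C (-((ω : ℂ) * Complex.I))) := by
  -- basic positivity facts
  have hr₂0 : 0 < r₂ := by linarith
  have h2r : 0 < 2 * r₂ - r₁ := by linarith
  have hK₂0 : 0 < K₂ := lt_trans (div_pos (by linarith) h2r) hK₂
  have hK₂ne : K₂ ≠ 0 := ne_of_gt hK₂0
  have hK32 : 3 / 2 < K₂ := by
    have h1 : 3 / 2 < 3 * r₂ / (2 * r₂ - r₁) := by
      rw [lt_div_iff₀ h2r]; nlinarith
    linarith
  have hKlin : 3 * r₂ < K₂ * (2 * r₂ - r₁) := (div_lt_iff₀ h2r).mp hK₂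
  have hneg : K₂ * (r₁ - 2 * r₂) + 3 * r₂ < 0 := by nlinarith
  have hD₀ne : 80 * K₂ * (K₂ * (r₁ - 2 * r₂) + 3 * r₂) ≠ 0 :=
    ne_of_lt (mul_neg_of_pos_of_neg (by positivity) hneg)
  -- abbreviations (inline): s := sqrt D
  set s : ℝ := Real.sqrt (r₁ ^ 4 * K₂ ^ 4 * (4 - 45 * c₁) ^ 2
        + 2 * r₁ ^ 2 * r₂ ^ 2 * K₂ ^ 2 *
          (45 * c₁ * (41 - 88 * K₂ + 96 * K₂ ^ 2)
            + 32 * K₂ * (1 + 8 * K₂) - 124)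
        + r₂ ^ 4 * (31 - 8 * K₂ * (1 + 8 * K₂)) ^ 2) with hs
  have hsnn : 0 ≤ s := Real.sqrt_nonneg _
  -- D ≥ (u+v)^2 where u,v as below
  have hfac : (r₁ ^ 4 * K₂ ^ 4 * (4 - 45 * c₁) ^ 2
        + 2 * r₁ ^ 2 * r₂ ^ 2 * K₂ ^ 2 *
          (45 * c₁ * (41 - 88 * K₂ + 96 * K₂ ^ 2)
            + 32 * K₂ * (1 + 8 * K₂) - 124)
        + r₂ ^ 4 * (31 - 8 * K₂ * (1 + 8 * K₂)) ^ 2)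
      - (r₁ ^ 2 * K₂ ^ 2 * (45 * c₁ - 4) + r₂ ^ 2 * (64 * K₂ ^ 2 + 8 * K₂ - 31)) ^ 2
      = 2 * r₁ ^ 2 * r₂ ^ 2 * K₂ ^ 2 *
          (360 * c₁ * (2 * K₂ - 3) ^ 2 + (512 * K₂ ^ 2 + 64 * K₂ - 248)) := by
    ring
  have hin : 0 ≤ 360 * c₁ * (2 * K₂ - 3) ^ 2 + (512 * K₂ ^ 2 + 64 * K₂ - 248) := by
    nlinarith [mul_nonneg hc₁0.le (sq_nonneg (2 * K₂ - 3)), hK32]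
  have hDge : (r₁ ^ 2 * K₂ ^ 2 * (45 * c₁ - 4) + r₂ ^ 2 * (64 * K₂ ^ 2 + 8 * K₂ - 31)) ^ 2
      ≤ (r₁ ^ 4 * K₂ ^ 4 * (4 - 45 * c₁) ^ 2
        + 2 * r₁ ^ 2 * r₂ ^ 2 * K₂ ^ 2 *
          (45 * c₁ * (41 - 88 * K₂ + 96 * K₂ ^ 2)
            + 32 * K₂ * (1 + 8 * K₂) - 124)
        + r₂ ^ 4 * (31 - 8 * K₂ * (1 + 8 * K₂)) ^ 2) := by
    nlinarith [mul_nonneg (by positivity : (0:ℝ) ≤ 2 * r₁ ^ 2 * r₂ ^ 2 * K₂ ^ 2) hin]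
  have hDnn : 0 ≤ (r₁ ^ 4 * K₂ ^ 4 * (4 - 45 * c₁) ^ 2
        + 2 * r₁ ^ 2 * r₂ ^ 2 * K₂ ^ 2 *
          (45 * c₁ * (41 - 88 * K₂ + 96 * K₂ ^ 2)
            + 32 * K₂ * (1 + 8 * K₂) - 124)
        + r₂ ^ 4 * (31 - 8 * K₂ * (1 + 8 * K₂)) ^ 2) :=
    le_trans (sq_nonneg _) hDge
  have hs2 : s ^ 2 = (r₁ ^ 4 * K₂ ^ 4 * (4 - 45 * c₁) ^ 2
        + 2 * r₁ ^ 2 * r₂ ^ 2 * K₂ ^ 2 *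
          (45 * c₁ * (41 - 88 * K₂ + 96 * K₂ ^ 2)
            + 32 * K₂ * (1 + 8 * K₂) - 124)
        + r₂ ^ 4 * (31 - 8 * K₂ * (1 + 8 * K₂)) ^ 2) := Real.sq_sqrt hDnn
  -- m * D₀ = s + B'
  have hmD : m * (80 * K₂ * (K₂ * (r₁ - 2 * r₂) + 3 * r₂))
      = s + (r₂ ^ 2 * (-96 * K₂ ^ 2 + 88 * K₂ - 41)
        + 8 * r₁ * r₂ * K₂ * (2 * K₂ - 3) - r₁ ^ 2 * K₂ ^ 2 * (4 + 45 * c₁)) := by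
    rw [hmm, hm₀, div_mul_cancel₀ _ hD₀ne, hs]
    ring
  -- the quadratic in m vanishes at m₀
  have hquad0 : (80 * K₂ * (K₂ * (r₁ - 2 * r₂) + 3 * r₂)) *
      (K₂ * (80 * K₂ * (K₂ * (r₁ - 2 * r₂) + 3 * r₂)) * m ^ 2
        - 2 * K₂ * (r₂ ^ 2 * (-96 * K₂ ^ 2 + 88 * K₂ - 41)
            + 8 * r₁ * r₂ * K₂ * (2 * K₂ - 3) - r₁ ^ 2 * K₂ ^ 2 * (4 + 45 * c₁)) * m
        + (3 * r₂ ^ 3 - 26 * r₂ ^ 3 * K₂ + 64 * r₂ ^ 3 * K₂ ^ 2 - 32 * r₂ ^ 3 * K₂ ^ 3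
          + (36 / 5) * r₁ * r₂ ^ 2 * K₂ - (48 / 5) * r₁ * r₂ ^ 2 * K₂ ^ 2
          + (16 / 5) * r₁ * r₂ ^ 2 * K₂ ^ 3 + (12 / 5) * r₁ ^ 2 * r₂ * K₂ ^ 2
          - (8 / 5) * r₁ ^ 2 * r₂ * K₂ ^ 3 + 9 * r₁ ^ 3 * K₂ ^ 3 * c₁)) = 0 := by
    linear_combination (K₂ * (m * (80 * K₂ * (K₂ * (r₁ - 2 * r₂) + 3 * r₂)))
        + K₂ * (s + (r₂ ^ 2 * (-96 * K₂ ^ 2 + 88 * K₂ - 41)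
            + 8 * r₁ * r₂ * K₂ * (2 * K₂ - 3) - r₁ ^ 2 * K₂ ^ 2 * (4 + 45 * c₁)))
        - 2 * K₂ * (r₂ ^ 2 * (-96 * K₂ ^ 2 + 88 * K₂ - 41)
            + 8 * r₁ * r₂ * K₂ * (2 * K₂ - 3) - r₁ ^ 2 * K₂ ^ 2 * (4 + 45 * c₁))) * hmD
      + K₂ * hs2
  have hquad : (K₂ * (80 * K₂ * (K₂ * (r₁ - 2 * r₂) + 3 * r₂)) * m ^ 2
        - 2 * K₂ * (r₂ ^ 2 * (-96 * K₂ ^ 2 + 88 * K₂ - 41)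
            + 8 * r₁ * r₂ * K₂ * (2 * K₂ - 3) - r₁ ^ 2 * K₂ ^ 2 * (4 + 45 * c₁)) * m
        + (3 * r₂ ^ 3 - 26 * r₂ ^ 3 * K₂ + 64 * r₂ ^ 3 * K₂ ^ 2 - 32 * r₂ ^ 3 * K₂ ^ 3
          + (36 / 5) * r₁ * r₂ ^ 2 * K₂ - (48 / 5) * r₁ * r₂ ^ 2 * K₂ ^ 2
          + (16 / 5) * r₁ * r₂ ^ 2 * K₂ ^ 3 + (12 / 5) * r₁ ^ 2 * r₂ * K₂ ^ 2
          - (8 / 5) * r₁ ^ 2 * r₂ * K₂ ^ 3 + 9 * r₁ ^ 3 * K₂ ^ 3 * c₁)) = 0 :=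
    (mul_eq_zero.mp hquad0).resolve_left hD₀ne
  -- q value and nonnegativity
  have hqval : 800 * K₂ ^ 2 *
      ((-(r₁ / 10)) * (r₂ * (2 * K₂ - 3) / (10 * K₂))
        + (-(r₁ / 10)) * (-m) + (r₂ * (2 * K₂ - 3) / (10 * K₂)) * (-m)
        - 0 * 0 - (-(3 * r₁ / 16)) * (3 * c₁ * r₁ / 5)
        - (r₂ * (1 - 4 * K₂) / (16 * K₂)) * (r₂ * (4 * K₂ - 1) / (5 * K₂)))
      = r₁ ^ 2 * K₂ ^ 2 * (45 * c₁ - 4) + r₂ ^ 2 * (64 * K₂ ^ 2 + 8 * K₂ - 31) + s := by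
    have e1 : 800 * K₂ ^ 2 *
      ((-(r₁ / 10)) * (r₂ * (2 * K₂ - 3) / (10 * K₂))
        + (-(r₁ / 10)) * (-m) + (r₂ * (2 * K₂ - 3) / (10 * K₂)) * (-m)
        - 0 * 0 - (-(3 * r₁ / 16)) * (3 * c₁ * r₁ / 5)
        - (r₂ * (1 - 4 * K₂) / (16 * K₂)) * (r₂ * (4 * K₂ - 1) / (5 * K₂)))
      = 10 * (r₂ ^ 2 - 8 * r₂ ^ 2 * K₂ + 16 * r₂ ^ 2 * K₂ ^ 2 + (12 / 5) * r₁ * r₂ * K₂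
          - (8 / 5) * r₁ * r₂ * K₂ ^ 2 + 9 * r₁ ^ 2 * K₂ ^ 2 * c₁)
        + m * (80 * K₂ * (K₂ * (r₁ - 2 * r₂) + 3 * r₂)) := by
      field_simp
      ring
    rw [e1, hmD]
    ring
  have hq : 0 ≤ (-(r₁ / 10)) * (r₂ * (2 * K₂ - 3) / (10 * K₂))
        + (-(r₁ / 10)) * (-m) + (r₂ * (2 * K₂ - 3) / (10 * K₂)) * (-m)
        - 0 * 0 - (-(3 * r₁ / 16)) * (3 * c₁ * r₁ / 5)
        - (r₂ * (1 - 4 * K₂) / (16 * K₂)) * (r₂ * (4 * K₂ - 1) / (5 * K₂)) := by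
    have huvs : 0 ≤ r₁ ^ 2 * K₂ ^ 2 * (45 * c₁ - 4)
        + r₂ ^ 2 * (64 * K₂ ^ 2 + 8 * K₂ - 31) + s := by
      nlinarith [hsnn, hs2, hDge]
    nlinarith [hqval, huvs, mul_pos hK₂0 hK₂0]
  -- the Routh–Hurwitz identity p*q = r at m = m₀
  have hkey : (-(r₁ / 10)) * (r₂ * (2 * K₂ - 3) / (10 * K₂)) * (-m)
        + 0 * (r₂ * (1 - 4 * K₂) / (16 * K₂)) * (3 * c₁ * r₁ / 5)
        + (-(3 * r₁ / 16)) * 0 * (r₂ * (4 * K₂ - 1) / (5 * K₂))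
        - (-(3 * r₁ / 16)) * (r₂ * (2 * K₂ - 3) / (10 * K₂)) * (3 * c₁ * r₁ / 5)
        - 0 * 0 * (-m)
        - (-(r₁ / 10)) * (r₂ * (1 - 4 * K₂) / (16 * K₂)) * (r₂ * (4 * K₂ - 1) / (5 * K₂))
      = ((-(r₁ / 10)) + r₂ * (2 * K₂ - 3) / (10 * K₂) + (-m)) *
        ((-(r₁ / 10)) * (r₂ * (2 * K₂ - 3) / (10 * K₂))
          + (-(r₁ / 10)) * (-m) + (r₂ * (2 * K₂ - 3) / (10 * K₂)) * (-m)
          - 0 * 0 - (-(3 * r₁ / 16)) * (3 * c₁ * r₁ / 5)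
          - (r₂ * (1 - 4 * K₂) / (16 * K₂)) * (r₂ * (4 * K₂ - 1) / (5 * K₂))) := by
    have h800 : (800 : ℝ) * K₂ ^ 3 ≠ 0 := by positivity
    have hlin : 800 * K₂ ^ 3 *
        (((-(r₁ / 10)) + r₂ * (2 * K₂ - 3) / (10 * K₂) + (-m)) *
          ((-(r₁ / 10)) * (r₂ * (2 * K₂ - 3) / (10 * K₂))
            + (-(r₁ / 10)) * (-m) + (r₂ * (2 * K₂ - 3) / (10 * K₂)) * (-m)
            - 0 * 0 - (-(3 * r₁ / 16)) * (3 * c₁ * r₁ / 5)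
            - (r₂ * (1 - 4 * K₂) / (16 * K₂)) * (r₂ * (4 * K₂ - 1) / (5 * K₂)))
          - ((-(r₁ / 10)) * (r₂ * (2 * K₂ - 3) / (10 * K₂)) * (-m)
            + 0 * (r₂ * (1 - 4 * K₂) / (16 * K₂)) * (3 * c₁ * r₁ / 5)
            + (-(3 * r₁ / 16)) * 0 * (r₂ * (4 * K₂ - 1) / (5 * K₂))
            - (-(3 * r₁ / 16)) * (r₂ * (2 * K₂ - 3) / (10 * K₂)) * (3 * c₁ * r₁ / 5)
            - 0 * 0 * (-m)
            - (-(r₁ / 10)) * (r₂ * (1 - 4 * K₂) / (16 * K₂)) * (r₂ * (4 * K₂ - 1) / (5 * K₂))))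
        = -(K₂ * (80 * K₂ * (K₂ * (r₁ - 2 * r₂) + 3 * r₂)) * m ^ 2
          - 2 * K₂ * (r₂ ^ 2 * (-96 * K₂ ^ 2 + 88 * K₂ - 41)
              + 8 * r₁ * r₂ * K₂ * (2 * K₂ - 3) - r₁ ^ 2 * K₂ ^ 2 * (4 + 45 * c₁)) * m
          + (3 * r₂ ^ 3 - 26 * r₂ ^ 3 * K₂ + 64 * r₂ ^ 3 * K₂ ^ 2 - 32 * r₂ ^ 3 * K₂ ^ 3
            + (36 / 5) * r₁ * r₂ ^ 2 * K₂ - (48 / 5) * r₁ * r₂ ^ 2 * K₂ ^ 2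
            + (16 / 5) * r₁ * r₂ ^ 2 * K₂ ^ 3 + (12 / 5) * r₁ ^ 2 * r₂ * K₂ ^ 2
            - (8 / 5) * r₁ ^ 2 * r₂ * K₂ ^ 3 + 9 * r₁ ^ 3 * K₂ ^ 3 * c₁)) := by
      field_simp
      ring
    have hz0 := hlin
    rw [hquad, neg_zero] at hz0
    have hz := (mul_eq_zero.mp hz0).resolve_left h800
    linarith
  refine ⟨(-(r₁ / 10)) + r₂ * (2 * K₂ - 3) / (10 * K₂) + (-m),
    Real.sqrt ((-(r₁ / 10)) * (r₂ * (2 * K₂ - 3) / (10 * K₂))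
        + (-(r₁ / 10)) * (-m) + (r₂ * (2 * K₂ - 3) / (10 * K₂)) * (-m)
        - 0 * 0 - (-(3 * r₁ / 16)) * (3 * c₁ * r₁ / 5)
        - (r₂ * (1 - 4 * K₂) / (16 * K₂)) * (r₂ * (4 * K₂ - 1) / (5 * K₂))), ?_⟩
  exact aux3 _ _ _ _ _ _ _ _ _ _ _ rfl (Real.sq_sqrt hq).symm
    (by rw [Real.sq_sqrt hq]; exact hkey)
end
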